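/- arXiv:math/0501545 — 7 statements merged into one kernel-verified Lean document; each statement's English description precedes it below -/
import Mathlib

section
/- Let A be a prime noetherian ring and x a nonzero, non-unit, normal element of A such that the ideal xA = Ax is completely prime. If P is a prime ideal of A not containing x such that the extension P·A_x to the localisation A_x at powers of x is a principal ideal (generated by a normal element), then P itself is a principal ideal of A generated by a normal element. -/
/-- A ring is prime if `aRb = 0` implies `a = 0` or `b = 0`. -/
def IsPrimeRing (A : Type*) [Ring A] : Prop :=
  ∀ a b : A, (∀ r : A, a * r * b = 0) → a = 0 ∨ b = 0

/-- An element `x` is normal if `xA = Ax`. -/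
def IsNormalElem {A : Type*} [Ring A] (x : A) : Prop :=
  {y | ∃ a, y = x * a} = {y | ∃ a, y = a * x}

/-- A two-sided ideal is prime. -/
def TwoSidedIdeal.IsPrimeTS {A : Type*} [Ring A] (P : TwoSidedIdeal A) : Prop :=
  P ≠ ⊤ ∧ ∀ a b : A, (∀ r : A, a * r * b ∈ P) → a ∈ P ∨ b ∈ P

/-- A two-sided ideal is completely prime (the quotient is a domain). -/
def TwoSidedIdeal.IsCompletelyPrime {A : Type*} [Ring A] (P : TwoSidedIdeal A) : Prop :=
  P ≠ ⊤ ∧ ∀ a b : A, a * b ∈ P → a ∈ P ∨ b ∈ P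

/-- A two-sided ideal is principal if it is generated by a normal element:
`I = xA = Ax` for some normal `x`. -/
def TwoSidedIdeal.IsPrincipalNormal {A : Type*} [Ring A] (I : TwoSidedIdeal A) : Prop :=
  ∃ x : A, IsNormalElem x ∧ (∀ y, y ∈ I ↔ ∃ a, y = x * a)

/-- A noetherian unique factorisation ring: a prime noetherian ring in which every
nonzero prime ideal contains a nonzero principal prime ideal. -/
def IsNoethUFR (A : Type*) [Ring A] : Prop :=
  IsPrimeRing A ∧ IsNoetherianRing A ∧
    ∀ P : TwoSidedIdeal A, P.IsPrimeTS → P ≠ ⊥ →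
      ∃ Q : TwoSidedIdeal A, Q ≠ ⊥ ∧ Q.IsPrimeTS ∧ Q.IsPrincipalNormal ∧ Q ≤ P

/-- A prime ideal of height one. -/
def TwoSidedIdeal.IsHeightOnePrime {A : Type*} [Ring A] (P : TwoSidedIdeal A) : Prop :=
  P.IsPrimeTS ∧ P ≠ ⊥ ∧ ∀ Q : TwoSidedIdeal A, Q.IsPrimeTS → Q < P → Q = ⊥

/-- A noetherian unique factorisation domain: a noetherian UFR which is a domain and in
which every height one prime ideal is completely prime. -/
def IsNoethUFD (A : Type*) [Ring A] : Prop :=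
  IsNoethUFR A ∧ IsDomain A ∧
    ∀ P : TwoSidedIdeal A, P.IsHeightOnePrime → P.IsCompletelyPrime

section aux
variable {R : Type*} [Ring R]

lemma IsNormalElem.ex_left {x : R} (h : IsNormalElem x) (a : R) : ∃ b, x * a = b * x := by
  have : x * a ∈ {y | ∃ a, y = x * a} := ⟨a, rfl⟩
  rw [h] at this
  obtain ⟨b, hb⟩ := this
  exact ⟨b, hb⟩

lemma IsNormalElem.ex_right {x : R} (h : IsNormalElem x) (a : R) : ∃ b, a * x = x * b := by
  have : a * x ∈ {y | ∃ a, y = a * x} := ⟨a, rfl⟩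
  rw [← h] at this
  obtain ⟨b, hb⟩ := this
  exact ⟨b, hb⟩

lemma IsNormalElem.pow_ex_left {x : R} (h : IsNormalElem x) (n : ℕ) (a : R) :
    ∃ b, x ^ n * a = b * x ^ n := by
  induction n generalizing a with
  | zero => exact ⟨a, by simp⟩
  | succ n ih =>
    obtain ⟨b, hb⟩ := h.ex_left a
    obtain ⟨c, hc⟩ := ih b
    exact ⟨c, by rw [pow_succ, mul_assoc, hb, ← mul_assoc, hc, mul_assoc]⟩

lemma IsNormalElem.pow_ex_right {x : R} (h : IsNormalElem x) (n : ℕ) (a : R) :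
    ∃ b, a * x ^ n = x ^ n * b := by
  induction n generalizing a with
  | zero => exact ⟨a, by simp⟩
  | succ n ih =>
    obtain ⟨b, hb⟩ := ih a
    obtain ⟨c, hc⟩ := h.ex_right b
    exact ⟨c, by rw [pow_succ, ← mul_assoc, hb, mul_assoc, hc, ← mul_assoc]⟩

/-- In a prime ring, a nonzero normal element is left-regular. -/
lemma IsNormalElem.left_cancel {x : R} (hR : IsPrimeRing R) (h : IsNormalElem x)
    (hx0 : x ≠ 0) {t : R} (ht : x * t = 0) : t = 0 := by
  have key : ∀ r, x * r * t = 0 := by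
    intro r
    obtain ⟨b, hb⟩ := h.ex_left r
    rw [hb, mul_assoc, ht, mul_zero]
  rcases hR x t key with h' | h'
  · exact absurd h' hx0
  · exact h'

/-- In a prime ring, a nonzero normal element is right-regular. -/
lemma IsNormalElem.right_cancel {x : R} (hR : IsPrimeRing R) (h : IsNormalElem x)
    (hx0 : x ≠ 0) {t : R} (ht : t * x = 0) : t = 0 := by
  have key : ∀ r, t * r * x = 0 := by
    intro r
    obtain ⟨b, hb⟩ := h.ex_right r
    rw [mul_assoc, hb, ← mul_assoc, ht, zero_mul]
  rcases hR t x key with h' | h'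
  · exact h'
  · exact absurd h' hx0

lemma TwoSidedIdeal.eq_top_of_one_mem {P : TwoSidedIdeal R} (h : (1 : R) ∈ P) : P = ⊤ := by
  refine SetLike.ext fun y => ⟨fun _ => TwoSidedIdeal.mem_top _, fun _ => ?_⟩
  simpa using P.mul_mem_left y 1 h

section strip
variable {P : TwoSidedIdeal R} (hP : P.IsPrimeTS) {x : R} (hxn : IsNormalElem x) (hxP : x ∉ P)
include hP hxn hxP

lemma pow_not_mem_prime (n : ℕ) : x ^ n ∉ P := by
  induction n with
  | zero => simpa using fun h => hP.1 (TwoSidedIdeal.eq_top_of_one_mem h)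
  | succ n ih =>
    intro hmem
    have key : ∀ r, x * r * x ^ n ∈ P := by
      intro r
      obtain ⟨b, hb⟩ := hxn.pow_ex_right n r
      rw [mul_assoc, hb, ← mul_assoc, ← pow_succ']
      exact P.mul_mem_right _ _ hmem
    rcases hP.2 x (x ^ n) key with h' | h'
    · exact hxP h'
    · exact ih h'

lemma strip_left {n : ℕ} {a : R} (h : x ^ n * a ∈ P) : a ∈ P := by
  have key : ∀ r, x ^ n * r * a ∈ P := by
    intro r
    obtain ⟨b, hb⟩ := hxn.pow_ex_left n r
    rw [hb, mul_assoc]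
    exact P.mul_mem_left _ _ h
  rcases hP.2 (x ^ n) a key with h' | h'
  · exact absurd h' (pow_not_mem_prime hP hxn hxP n)
  · exact h'

lemma strip_right {n : ℕ} {a : R} (h : a * x ^ n ∈ P) : a ∈ P := by
  have key : ∀ r, a * r * x ^ n ∈ P := by
    intro r
    obtain ⟨b, hb⟩ := hxn.pow_ex_right n r
    rw [mul_assoc, hb, ← mul_assoc]
    exact P.mul_mem_right _ _ h
  rcases hP.2 a (x ^ n) key with h' | h'
  · exact h'
  · exact absurd h' (pow_not_mem_prime hP hxn hxP n)

end strip

lemma mem_span_singleton_normal {x : R} (hxn : IsNormalElem x) {y : R} :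
    y ∈ TwoSidedIdeal.span {x} ↔ ∃ b, y = x * b := by
  constructor
  · intro hy
    rw [TwoSidedIdeal.mem_span_iff] at hy
    have hz : (0 : R) ∈ {y : R | ∃ b, y = x * b} := ⟨0, (mul_zero x).symm⟩
    have hadd : ∀ {u v : R}, u ∈ {y : R | ∃ b, y = x * b} → v ∈ {y : R | ∃ b, y = x * b} →
        u + v ∈ {y : R | ∃ b, y = x * b} := by
      rintro u v ⟨b, rfl⟩ ⟨c, rfl⟩
      exact ⟨b + c, (mul_add x b c).symm⟩
    have hneg : ∀ {u : R}, u ∈ {y : R | ∃ b, y = x * b} → -u ∈ {y : R | ∃ b, y = x * b} := by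
      rintro u ⟨b, rfl⟩
      exact ⟨-b, (mul_neg x b).symm⟩
    have hml : ∀ {u v : R}, v ∈ {y : R | ∃ b, y = x * b} → u * v ∈ {y : R | ∃ b, y = x * b} := by
      rintro u v ⟨b, rfl⟩
      obtain ⟨c, hc⟩ := hxn.ex_right u
      exact ⟨c * b, by rw [← mul_assoc, hc, mul_assoc]⟩
    have hmr : ∀ {u v : R}, u ∈ {y : R | ∃ b, y = x * b} → u * v ∈ {y : R | ∃ b, y = x * b} := by
      rintro u v ⟨b, rfl⟩
      exact ⟨b * v, mul_assoc x b v⟩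
    have := hy (TwoSidedIdeal.mk' _ hz hadd hneg hml hmr) ?_
    · rwa [TwoSidedIdeal.mem_mk'] at this
    · intro z hz'
      rw [Set.mem_singleton_iff] at hz'
      subst hz'
      rw [SetLike.mem_coe, TwoSidedIdeal.mem_mk']
      exact ⟨1, (mul_one _).symm⟩
  · rintro ⟨b, rfl⟩
    exact TwoSidedIdeal.mul_mem_right _ _ _ (TwoSidedIdeal.subset_span rfl)

end aux

open OreLocalization

theorem nagata_aux {A : Type*} [Ring A]
    (hNoeth : IsNoetherianRing A) (hPrime : IsPrimeRing A)
    (x : A) (hx0 : x ≠ 0) (hxu : ¬ IsUnit x) (hxn : IsNormalElem x)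
    (hxcp : (TwoSidedIdeal.span {x}).IsCompletelyPrime)
    [OreSet (Submonoid.powers x)]
    (P : TwoSidedIdeal A) (hP : P.IsPrimeTS) (hxP : x ∉ P)
    (hPloc : (TwoSidedIdeal.span
        (numeratorHom '' (P : Set A)) :
        TwoSidedIdeal (A[(Submonoid.powers x)⁻¹])).IsPrincipalNormal) :
    P.IsPrincipalNormal := by
  classical
  by_cases hPbot : P = ⊥
  · subst hPbot
    refine ⟨0, ?_, ?_⟩
    · unfold IsNormalElem
      ext y
      simp [eq_comm]
    · intro y
      rw [TwoSidedIdeal.mem_bot]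
      simp [eq_comm]
  -- setup
  · obtain ⟨p, hpn, hpmem⟩ := hPloc
    have hxreg_l : ∀ {t : A}, x * t = 0 → t = 0 := fun h => IsNormalElem.left_cancel hPrime hxn hx0 h
    have hxreg_r : ∀ {t : A}, t * x = 0 → t = 0 := fun h => IsNormalElem.right_cancel hPrime hxn hx0 h
    have hpow_l : ∀ (n : ℕ) {t : A}, x ^ n * t = 0 → t = 0 := by
      intro n
      induction n with
      | zero => intro t h; simpa using h
      | succ n ih =>
        intro t h
        rw [pow_succ', mul_assoc] at h
        exact ih (hxreg_l h)
    have hpow_r : ∀ (n : ℕ) {t : A}, t * x ^ n = 0 → t = 0 := by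
      intro n
      induction n with
      | zero => intro t h; simpa using h
      | succ n ih =>
        intro t h
        rw [pow_succ, ← mul_assoc] at h
        exact ih (hxreg_r h)
    let sn : ℕ → Submonoid.powers x := fun n => ⟨x ^ n, ⟨n, rfl⟩⟩
    have hsn : ∀ n, (sn n : A) = x ^ n := fun n => rfl
    have hsn0 : (1 : Submonoid.powers x) = sn 0 := Subtype.ext (pow_zero x).symm
    -- zero criterion
    have zeroIff : ∀ (q : A) (s : Submonoid.powers x), q /ₒ s = 0 ↔ q = 0 := by
      intro q s
      constructor
      · intro h
        rw [OreLocalization.zero_def, oreDiv_eq_iff] at h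
        obtain ⟨u, v, h1, h2⟩ := h
        rw [Submonoid.smul_def, smul_eq_mul, mul_zero, smul_eq_mul] at h1
        obtain ⟨m, hm'⟩ := s.2
        obtain ⟨k, hk'⟩ := u.2
        have hm : x ^ m = (s : A) := hm'
        have hk : x ^ k = (u : A) := hk'
        obtain ⟨qt, hqt⟩ := IsNormalElem.pow_ex_right hxn m q
        have h2' : x ^ k = v * x ^ m := by
          rw [hk, hm]
          simpa using h2
        have hzz : x ^ k * qt = 0 := by
          rw [h2', mul_assoc, ← hqt, ← mul_assoc, ← h1, zero_mul]
        have : qt = 0 := hpow_l k hzz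
        rw [this, mul_zero] at hqt
        exact hpow_r m hqt
      · rintro rfl
        exact zero_oreDiv s
    have injA : ∀ {a b : A}, a /ₒ (1 : Submonoid.powers x) = b /ₒ (1 : Submonoid.powers x) → a = b := by
      intro a b h
      have h0 : (a - b) /ₒ (1 : Submonoid.powers x) = 0 := by
        rw [sub_eq_add_neg, ← add_oreDiv, ← OreLocalization.neg_def, h, add_neg_cancel]
      exact sub_eq_zero.mp ((zeroIff _ _).1 h0)
    have raise : ∀ (q : A) (n k : ℕ), q /ₒ sn n = (x ^ k * q) /ₒ sn (k + n) := by
      intro q n k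
      rw [OreLocalization.expand' q (sn n) (sn k)]
      congr 1
      exact Subtype.ext (pow_add x k n).symm
    have xpow_mul : ∀ (m n : ℕ) (r : A),
        (x ^ m /ₒ (1 : Submonoid.powers x)) * (r /ₒ sn n) = (x ^ m * r) /ₒ sn n := by
      intro m n r
      have h := oreDiv_mul_char (x ^ m) r (1 : Submonoid.powers x) (sn n) (x ^ m) (sn n)
        (by rw [hsn, ← pow_add, ← pow_add, add_comm])
      rwa [mul_one] at h
    have cancel_pow : ∀ (n : ℕ) (r : A), (x ^ n /ₒ (1 : Submonoid.powers x)) * (r /ₒ sn n) = r /ₒ (1 : Submonoid.powers x) := by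
      intro n r
      rw [xpow_mul n n r, hsn0, raise r 0 n, Nat.add_zero]
    have numden : ∀ b : A[(Submonoid.powers x)⁻¹], ∃ (r : A) (n : ℕ), b = r /ₒ sn n := by
      intro b
      induction b using OreLocalization.ind with
      | _ r s =>
        obtain ⟨n, hn'⟩ := s.2
        have hn : x ^ n = (s : A) := hn'
        exact ⟨r, n, by rw [show s = sn n from Subtype.ext hn.symm]⟩
    -- description of the carrier of the extended ideal
    have memI : ∀ y : A[(Submonoid.powers x)⁻¹], y ∈ TwoSidedIdeal.span (numeratorHom '' (P : Set A)) ↔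
        ∃ (n : ℕ) (q : A), q ∈ P ∧ y = q /ₒ sn n := by
      have hC0 : (0 : A[(Submonoid.powers x)⁻¹]) ∈ {y : A[(Submonoid.powers x)⁻¹] | ∃ (n : ℕ) (q : A), q ∈ P ∧ y = q /ₒ sn n} :=
        ⟨0, 0, P.zero_mem, (zero_oreDiv _).symm⟩
      have hCadd : ∀ {u v : A[(Submonoid.powers x)⁻¹]},
          u ∈ {y : A[(Submonoid.powers x)⁻¹] | ∃ (n : ℕ) (q : A), q ∈ P ∧ y = q /ₒ sn n} →
          v ∈ {y : A[(Submonoid.powers x)⁻¹] | ∃ (n : ℕ) (q : A), q ∈ P ∧ y = q /ₒ sn n} →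
          u + v ∈ {y : A[(Submonoid.powers x)⁻¹] | ∃ (n : ℕ) (q : A), q ∈ P ∧ y = q /ₒ sn n} := by
        rintro u v ⟨n, q, hq, rfl⟩ ⟨n', q', hq', rfl⟩
        refine ⟨n + n', x ^ n' * q + x ^ n * q', ?_, ?_⟩
        · exact P.add_mem (P.mul_mem_left _ _ hq) (P.mul_mem_left _ _ hq')
        · rw [raise q n n', raise q' n' n, add_comm n' n, add_oreDiv]
      have hCneg : ∀ {u : A[(Submonoid.powers x)⁻¹]},
          u ∈ {y : A[(Submonoid.powers x)⁻¹] | ∃ (n : ℕ) (q : A), q ∈ P ∧ y = q /ₒ sn n} →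
          -u ∈ {y : A[(Submonoid.powers x)⁻¹] | ∃ (n : ℕ) (q : A), q ∈ P ∧ y = q /ₒ sn n} := by
        rintro u ⟨n, q, hq, rfl⟩
        exact ⟨n, -q, P.neg_mem hq, (OreLocalization.neg_def q (sn n))⟩
      have hCml : ∀ {u v : A[(Submonoid.powers x)⁻¹]},
          v ∈ {y : A[(Submonoid.powers x)⁻¹] | ∃ (n : ℕ) (q : A), q ∈ P ∧ y = q /ₒ sn n} →
          u * v ∈ {y : A[(Submonoid.powers x)⁻¹] | ∃ (n : ℕ) (q : A), q ∈ P ∧ y = q /ₒ sn n} := by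
        rintro u v ⟨n, q, hq, rfl⟩
        obtain ⟨r, m, rfl⟩ := numden u
        obtain ⟨r', s', hore⟩ := oreCondition r (sn n)
        obtain ⟨k, hk'⟩ := s'.2
        have hk : x ^ k = (s' : A) := hk'
        refine ⟨k + m, r' * q, P.mul_mem_left _ _ hq, ?_⟩
        rw [oreDiv_mul_char r q (sn m) (sn n) r' s' hore]
        congr 1
        exact Subtype.ext (by rw [Submonoid.coe_mul, ← hk, hsn, hsn, pow_add])
      have hCmr : ∀ {u v : A[(Submonoid.powers x)⁻¹]},
          u ∈ {y : A[(Submonoid.powers x)⁻¹] | ∃ (n : ℕ) (q : A), q ∈ P ∧ y = q /ₒ sn n} →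
          u * v ∈ {y : A[(Submonoid.powers x)⁻¹] | ∃ (n : ℕ) (q : A), q ∈ P ∧ y = q /ₒ sn n} := by
        rintro u v ⟨n, q, hq, rfl⟩
        obtain ⟨r, m, rfl⟩ := numden v
        obtain ⟨r', s', hore⟩ := oreCondition q (sn m)
        obtain ⟨k, hk'⟩ := s'.2
        have hk : x ^ k = (s' : A) := hk'
        have hr'P : r' ∈ P := by
          apply strip_right hP hxn hxP (n := m)
          rw [hsn] at hore
          rw [← hore, ← hk]
          exact P.mul_mem_left _ _ hq
        refine ⟨k + n, r' * r, P.mul_mem_right _ _ hr'P, ?_⟩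
        rw [oreDiv_mul_char q r (sn n) (sn m) r' s' hore]
        congr 1
        exact Subtype.ext (by rw [Submonoid.coe_mul, ← hk, hsn, hsn, pow_add])
      intro y
      constructor
      · intro hy
        rw [TwoSidedIdeal.mem_span_iff] at hy
        have := hy (TwoSidedIdeal.mk' _ hC0 hCadd hCneg hCml hCmr) ?_
        · rwa [TwoSidedIdeal.mem_mk'] at this
        · rintro z ⟨q, hq, rfl⟩
          rw [SetLike.mem_coe, TwoSidedIdeal.mem_mk']
          exact ⟨0, q, hq, by rw [numeratorHom_apply, hsn0]⟩
      · rintro ⟨n, q, hq, rfl⟩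
        have h1 : q /ₒ sn n = (1 /ₒ sn n) * (q /ₒ (1 : Submonoid.powers x)) := by
          rw [OreLocalization.one_div_mul, one_mul]
        rw [h1]
        refine TwoSidedIdeal.mul_mem_left _ _ _ ?_
        rw [← numeratorHom_apply]
        exact TwoSidedIdeal.subset_span ⟨q, hq, rfl⟩
    -- contraction
    have contraction : ∀ {c : A},
        (c /ₒ (1 : Submonoid.powers x)) ∈ TwoSidedIdeal.span (numeratorHom '' (P : Set A)) → c ∈ P := by
      intro c hc
      obtain ⟨n, q, hq, heq⟩ := (memI _).1 hc
      rw [oreDiv_eq_iff] at heq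
      obtain ⟨u, v, h1, h2⟩ := heq
      obtain ⟨k, hk'⟩ := u.2
      have hk : x ^ k = (u : A) := hk'
      rw [Submonoid.smul_def, smul_eq_mul, smul_eq_mul] at h1
      have h2' : x ^ (k + n) = v := by
        rw [hsn, Submonoid.coe_one, mul_one] at h2
        rw [pow_add, hk, h2]
      apply strip_left hP hxn hxP (n := k + n)
      rw [h2', ← h1, ← hk]
      exact P.mul_mem_left _ _ hq
    -- the localisation is a prime ring
    have Bprime : IsPrimeRing (A[(Submonoid.powers x)⁻¹]) := by
      intro s t hst
      obtain ⟨a, m, rfl⟩ := numden s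
      obtain ⟨b, n, rfl⟩ := numden t
      have key : ∀ r : A, a * r * b = 0 := by
        intro r
        have h := hst ((r * x ^ n) /ₒ (1 : Submonoid.powers x))
        rw [mul_div_one] at h
        rw [oreDiv_mul_char (a * (r * x ^ n)) b (sn m) (sn n) (a * r) (1 : Submonoid.powers x)
          (by rw [Submonoid.coe_one, one_mul, hsn, mul_assoc]), one_mul] at h
        exact (zeroIff _ _).1 h
      rcases hPrime a b key with h | h
      · left; rw [h, zero_oreDiv]
      · right; rw [h, zero_oreDiv]
    -- x is a normal unit in the localisation
    have hxbar_unit : IsUnit ((x /ₒ (1 : Submonoid.powers x)) : A[(Submonoid.powers x)⁻¹]) := by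
      have h := numerator_isUnit (⟨x, ⟨1, pow_one x⟩⟩ : Submonoid.powers x)
      rw [numeratorHom_apply] at h
      exact h
    have xbar_pow : ∀ m : ℕ, ((x /ₒ (1 : Submonoid.powers x)) : A[(Submonoid.powers x)⁻¹]) ^ m = x ^ m /ₒ (1 : Submonoid.powers x) := by
      intro m
      induction m with
      | zero => rw [pow_zero, pow_zero, OreLocalization.one_def]
      | succ m ih => rw [pow_succ, ih, mul_div_one, ← pow_succ]
    have hxpow_unit : ∀ m : ℕ, IsUnit ((x ^ m /ₒ (1 : Submonoid.powers x)) : A[(Submonoid.powers x)⁻¹]) := by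
      intro m
      have h := hxbar_unit.pow m
      rwa [xbar_pow] at h
    have hxmul : ∀ (n : ℕ) (r : A), (x /ₒ (1 : Submonoid.powers x)) * (r /ₒ sn n) = (x * r) /ₒ sn n := by
      intro n r
      have h := xpow_mul 1 n r
      rwa [pow_one] at h
    -- facts about p
    obtain ⟨q0, m0, hpq0⟩ := numden p
    have hq0bar : q0 /ₒ (1 : Submonoid.powers x) = (x ^ m0 /ₒ (1 : Submonoid.powers x)) * p := by rw [hpq0, cancel_pow]
    have hpI : p ∈ TwoSidedIdeal.span (numeratorHom '' (P : Set A)) :=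
      (hpmem p).2 ⟨1, (mul_one p).symm⟩
    have hq0P : q0 ∈ P := by
      apply contraction
      rw [hq0bar]
      exact TwoSidedIdeal.mul_mem_left _ _ _ hpI
    have hc0 : ∃ c, c ∈ P ∧ c ≠ 0 := by
      by_contra hcon
      push_neg at hcon
      apply hPbot
      refine SetLike.ext fun y => ⟨fun hy => ?_, fun hy => ?_⟩
      · exact (TwoSidedIdeal.mem_bot _).2 (hcon y hy)
      · rw [TwoSidedIdeal.mem_bot] at hy
        rw [hy]
        exact P.zero_mem
    have hp0 : p ≠ 0 := by
      obtain ⟨c, hcP, hc00⟩ := hc0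
      intro hp
      have hcI : (numeratorHom c : A[(Submonoid.powers x)⁻¹]) ∈ TwoSidedIdeal.span (numeratorHom '' (P : Set A)) :=
        TwoSidedIdeal.subset_span ⟨c, hcP, rfl⟩
      obtain ⟨t, ht⟩ := (hpmem _).1 hcI
      rw [hp, zero_mul, numeratorHom_apply] at ht
      exact hc00 ((zeroIff c 1).1 ht)
    have hq00 : q0 ≠ 0 := by
      intro h
      apply hp0
      rw [hpq0, h, zero_oreDiv]
    have pcancel : ∀ {t : A[(Submonoid.powers x)⁻¹]}, t * p = 0 → t = 0 :=
      fun ht => IsNormalElem.right_cancel Bprime hpn hp0 ht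
    -- the notion of a good generator
    let Good : A → Prop := fun a =>
      a ∈ P ∧ a ≠ 0 ∧ ∃ w : (A[(Submonoid.powers x)⁻¹])ˣ, (a /ₒ (1 : Submonoid.powers x)) = ↑w * p
    have hGoodq0 : Good q0 :=
      ⟨hq0P, hq00, (hxpow_unit m0).unit, by rw [IsUnit.unit_spec, ← hq0bar]⟩
    -- find a good generator not divisible by x
    have main : ∃ a, Good a ∧ ¬∃ b, a = x * b := by
      by_contra hcon
      push_neg at hcon
      have wf : WellFounded ((· > ·) : Submodule A A → Submodule A A → Prop) :=
        IsNoetherian.wf hNoeth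
      have key : ∀ N : Submodule A A, ∀ a, Good a → Submodule.span A {a} = N → False := by
        intro N
        refine wf.induction
          (C := fun N => ∀ a, Good a → Submodule.span A {a} = N → False) N ?_
        intro M ih a hGa hspan
        obtain ⟨haP, ha0, w, hwa⟩ := hGa
        obtain ⟨b, hab⟩ := hcon a ⟨haP, ha0, w, hwa⟩
        have hbP : b ∈ P := by
          apply strip_left hP hxn hxP (n := 1)
          rw [pow_one, ← hab]
          exact haP
        have hb0 : b ≠ 0 := fun h => ha0 (by rw [hab, h, mul_zero])
        have habbar : (x /ₒ (1 : Submonoid.powers x)) * (b /ₒ (1 : Submonoid.powers x)) = ↑w * p := by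
          rw [mul_div_one, ← hab, hwa]
        have hbbar : b /ₒ (1 : Submonoid.powers x) = ↑(hxbar_unit.unit⁻¹ * w) * p := by
          calc b /ₒ (1 : Submonoid.powers x)
              = ↑hxbar_unit.unit⁻¹ * ((x /ₒ (1 : Submonoid.powers x)) *
                (b /ₒ (1 : Submonoid.powers x))) := by
                rw [← mul_assoc, IsUnit.val_inv_mul hxbar_unit, one_mul]
            _ = ↑hxbar_unit.unit⁻¹ * (↑w * p) := by rw [habbar]
            _ = ↑(hxbar_unit.unit⁻¹ * w) * p := by rw [Units.val_mul, mul_assoc]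
        have hGb : Good b := ⟨hbP, hb0, hxbar_unit.unit⁻¹ * w, hbbar⟩
        have hle : Submodule.span A {a} ≤ Submodule.span A {b} := by
          rw [Submodule.span_le, Set.singleton_subset_iff]
          exact Submodule.mem_span_singleton.2 ⟨x, by rw [smul_eq_mul]; exact hab.symm⟩
        have hne : Submodule.span A {a} ≠ Submodule.span A {b} := by
          intro heq
          have hbmem : b ∈ Submodule.span A {a} := by
            rw [heq]
            exact Submodule.mem_span_singleton_self b
          obtain ⟨d, hd⟩ := Submodule.mem_span_singleton.1 hbmem
          rw [smul_eq_mul] at hd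
          have hzero : (1 - d * x) * b = 0 := by
            rw [sub_mul, one_mul, mul_assoc, ← hab, hd, sub_self]
          have hzbar : ((1 - d * x) /ₒ (1 : Submonoid.powers x)) * (b /ₒ (1 : Submonoid.powers x)) = 0 := by
            rw [mul_div_one, hzero, zero_oreDiv]
          rw [hbbar, ← mul_assoc] at hzbar
          have h1dx : (1 : A) - d * x = 0 := by
            apply (zeroIff _ _).1
            have h2 := pcancel hzbar
            rwa [Units.mul_left_eq_zero] at h2
          have hdx : d * x = 1 := (sub_eq_zero.mp h1dx).symm
          have hxd : x * d = 1 := by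
            have h3 : (x * d - 1) * x = 0 := by
              rw [sub_mul, one_mul, mul_assoc, hdx, mul_one, sub_self]
            exact sub_eq_zero.mp (hxreg_r h3)
          exact hxu ⟨⟨x, d, hxd, hdx⟩, rfl⟩
        exact ih (Submodule.span A {b}) (hspan ▸ lt_of_le_of_ne hle hne) b hGb rfl
      exact key _ q0 hGoodq0 rfl
    obtain ⟨a, hGa, haX⟩ := main
    obtain ⟨haP, ha0, w, hwa⟩ := hGa
    -- complete primeness of xA, reformulated
    have cp : ∀ u v : A, (∃ c, u * v = x * c) → (∃ c, u = x * c) ∨ (∃ c, v = x * c) := by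
      intro u v h
      rcases hxcp.2 u v ((mem_span_singleton_normal hxn).2 h) with h' | h'
      · exact Or.inl ((mem_span_singleton_normal hxn).1 h')
      · exact Or.inr ((mem_span_singleton_normal hxn).1 h')
    -- membership in the extended ideal as left multiples of p
    have hp_left : ∀ y : A[(Submonoid.powers x)⁻¹],
        y ∈ TwoSidedIdeal.span (numeratorHom '' (P : Set A)) ↔ ∃ t, y = t * p := by
      intro y
      rw [hpmem y]
      constructor
      · rintro ⟨t, rfl⟩
        have h : p * t ∈ {y : A[(Submonoid.powers x)⁻¹] | ∃ c, y = p * c} := ⟨t, rfl⟩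
        rw [hpn] at h
        exact h
      · rintro ⟨t, rfl⟩
        have h : t * p ∈ {y : A[(Submonoid.powers x)⁻¹] | ∃ c, y = c * p} := ⟨t, rfl⟩
        rw [← hpn] at h
        exact h
    -- left multiples
    have hD2 : ∀ c, c ∈ P → ∃ t, c = t * a := by
      intro c hc
      have hcI : (numeratorHom c : A[(Submonoid.powers x)⁻¹]) ∈
          TwoSidedIdeal.span (numeratorHom '' (P : Set A)) :=
        TwoSidedIdeal.subset_span ⟨c, hc, rfl⟩
      obtain ⟨t, ht⟩ := (hp_left _).1 hcI
      rw [numeratorHom_apply] at ht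
      have hp' : p = ↑w⁻¹ * (a /ₒ (1 : Submonoid.powers x)) := by
        rw [hwa, ← mul_assoc, Units.inv_mul, one_mul]
      obtain ⟨b, n, hbn⟩ := numden (t * ↑w⁻¹)
      have hc1 : c /ₒ (1 : Submonoid.powers x) =
          (b /ₒ sn n) * (a /ₒ (1 : Submonoid.powers x)) := by
        rw [ht, hp', ← mul_assoc, hbn]
      have hc2 : x ^ n * c = b * a := by
        apply injA
        calc (x ^ n * c) /ₒ (1 : Submonoid.powers x)
            = (x ^ n /ₒ (1 : Submonoid.powers x)) * (c /ₒ (1 : Submonoid.powers x)) := by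
              rw [mul_div_one]
          _ = (x ^ n /ₒ (1 : Submonoid.powers x)) *
              ((b /ₒ sn n) * (a /ₒ (1 : Submonoid.powers x))) := by rw [hc1]
          _ = ((x ^ n /ₒ (1 : Submonoid.powers x)) * (b /ₒ sn n)) *
              (a /ₒ (1 : Submonoid.powers x)) := by rw [mul_assoc]
          _ = (b /ₒ (1 : Submonoid.powers x)) * (a /ₒ (1 : Submonoid.powers x)) := by
              rw [cancel_pow]
          _ = (b * a) /ₒ (1 : Submonoid.powers x) := by rw [mul_div_one]
      have SL2 : ∀ (n : ℕ) (c b : A), x ^ n * c = b * a → ∃ t, c = t * a := by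
        intro n
        induction n with
        | zero => intro c b h; exact ⟨b, by simpa using h⟩
        | succ n ih =>
          intro c b h
          rcases cp b a ⟨x ^ n * c, by rw [← h, pow_succ', mul_assoc]⟩ with hb | hA
          · obtain ⟨b', rfl⟩ := hb
            have h2 : x * (x ^ n * c) = x * (b' * a) := by
              rw [← mul_assoc, ← pow_succ', h, mul_assoc]
            have h3 : x * (x ^ n * c - b' * a) = 0 := by rw [mul_sub, h2, sub_self]
            exact ih c b' (sub_eq_zero.mp (hxreg_l h3))
          · exact absurd hA haX
      exact SL2 n c b hc2
    -- the sequence of conjugates of a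
    choose f hf using fun c : A => IsNormalElem.ex_left hxn c
    have haseq_succ : ∀ k : ℕ, x * (f^[k] a) = (f^[k+1] a) * x := by
      intro k
      rw [Function.iterate_succ_apply']
      exact hf _
    have hkey : ∀ k : ℕ, x ^ k * a = (f^[k] a) * x ^ k := by
      intro k
      induction k with
      | zero => simp
      | succ k ih =>
        calc x ^ (k+1) * a = x * (x ^ k * a) := by rw [← mul_assoc, ← pow_succ']
          _ = x * (f^[k] a * x ^ k) := by rw [ih]
          _ = (x * f^[k] a) * x ^ k := by rw [mul_assoc]
          _ = (f^[k+1] a * x) * x ^ k := by rw [haseq_succ]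
          _ = f^[k+1] a * x ^ (k+1) := by rw [mul_assoc, ← pow_succ']
    have haseqP : ∀ k, f^[k] a ∈ P := by
      intro k
      induction k with
      | zero => simpa using haP
      | succ k ih =>
        apply strip_right hP hxn hxP (n := 1)
        rw [pow_one, ← haseq_succ]
        exact P.mul_mem_left _ _ ih
    have haseqX : ∀ k, ¬∃ b, f^[k] a = x * b := by
      intro k
      induction k with
      | zero => simpa using haX
      | succ k ih =>
        rintro ⟨e, he⟩
        apply ih
        have h1 : x * (f^[k] a) = x * (e * x) := by
          rw [haseq_succ, he, mul_assoc]
        have h3 : x * (f^[k] a - e * x) = 0 := by rw [mul_sub, h1, sub_self]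
        have h2 : f^[k] a = e * x := sub_eq_zero.mp (hxreg_l h3)
        obtain ⟨e', he'⟩ := IsNormalElem.ex_right hxn e
        exact ⟨e', by rw [h2, he']⟩
    -- right multiples
    have hD1 : ∀ c, c ∈ P → ∃ t, c = a * t := by
      intro c hc
      have hcI : (numeratorHom c : A[(Submonoid.powers x)⁻¹]) ∈
          TwoSidedIdeal.span (numeratorHom '' (P : Set A)) :=
        TwoSidedIdeal.subset_span ⟨c, hc, rfl⟩
      have hcI2 : (↑w⁻¹ : A[(Submonoid.powers x)⁻¹]) * numeratorHom c ∈
          TwoSidedIdeal.span (numeratorHom '' (P : Set A)) :=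
        TwoSidedIdeal.mul_mem_left _ _ _ hcI
      obtain ⟨t, ht⟩ := (hpmem _).1 hcI2
      have ht2 : (numeratorHom c : A[(Submonoid.powers x)⁻¹]) =
          (a /ₒ (1 : Submonoid.powers x)) * t := by
        rw [hwa, mul_assoc, ← ht, ← mul_assoc, Units.mul_inv, one_mul]
      obtain ⟨b, n, rfl⟩ := numden t
      rw [numeratorHom_apply] at ht2
      have hc2 : x ^ n * c = (f^[n] a) * b := by
        apply injA
        calc (x ^ n * c) /ₒ (1 : Submonoid.powers x)
            = (x ^ n /ₒ (1 : Submonoid.powers x)) * (c /ₒ (1 : Submonoid.powers x)) := by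
              rw [mul_div_one]
          _ = (x ^ n /ₒ (1 : Submonoid.powers x)) *
              ((a /ₒ (1 : Submonoid.powers x)) * (b /ₒ sn n)) := by rw [ht2]
          _ = ((x ^ n /ₒ (1 : Submonoid.powers x)) * (a /ₒ (1 : Submonoid.powers x))) *
              (b /ₒ sn n) := by rw [mul_assoc]
          _ = ((x ^ n * a) /ₒ (1 : Submonoid.powers x)) * (b /ₒ sn n) := by rw [mul_div_one]
          _ = ((f^[n] a * x ^ n) /ₒ (1 : Submonoid.powers x)) * (b /ₒ sn n) := by rw [hkey]
          _ = ((f^[n] a /ₒ (1 : Submonoid.powers x)) * (x ^ n /ₒ (1 : Submonoid.powers x))) *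
              (b /ₒ sn n) := by rw [mul_div_one]
          _ = (f^[n] a /ₒ (1 : Submonoid.powers x)) *
              ((x ^ n /ₒ (1 : Submonoid.powers x)) * (b /ₒ sn n)) := by rw [mul_assoc]
          _ = (f^[n] a /ₒ (1 : Submonoid.powers x)) * (b /ₒ (1 : Submonoid.powers x)) := by
              rw [cancel_pow]
          _ = (f^[n] a * b) /ₒ (1 : Submonoid.powers x) := by rw [mul_div_one]
      have SL1 : ∀ (n : ℕ) (c b : A), x ^ n * c = (f^[n] a) * b → ∃ t, c = a * t := by
        intro n
        induction n with
        | zero => intro c b h; exact ⟨b, by simpa using h⟩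
        | succ n ih =>
          intro c b h
          rcases cp (f^[n+1] a) b ⟨x ^ n * c, by rw [← h, pow_succ', mul_assoc]⟩ with hA | hb
          · exact absurd hA (haseqX (n+1))
          · obtain ⟨b', rfl⟩ := hb
            have h2 : x * (x ^ n * c) = x * (f^[n] a * b') := by
              rw [← mul_assoc, ← pow_succ', h, ← mul_assoc, ← haseq_succ, mul_assoc]
            have h3 : x * (x ^ n * c - f^[n] a * b') = 0 := by rw [mul_sub, h2, sub_self]
            exact ih c b' (sub_eq_zero.mp (hxreg_l h3))
      exact SL1 n c b hc2
    -- assemble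
    refine ⟨a, ?_, ?_⟩
    · unfold IsNormalElem
      ext y
      simp only [Set.mem_setOf_eq]
      constructor
      · rintro ⟨c, rfl⟩
        exact hD2 _ (P.mul_mem_right _ _ haP)
      · rintro ⟨c, rfl⟩
        exact hD1 _ (P.mul_mem_left _ _ haP)
    · intro y
      constructor
      · exact hD1 y
      · rintro ⟨t, rfl⟩
        exact P.mul_mem_right _ _ haP

open OreLocalization in
/-- Nagata's lemma, part (i): if `P` is a prime ideal of `A` not containing the normal
element `x`, and the extension of `P` to the localisation `A_x` is principal, then `P`
is principal. -/
theorem nagata_part_i {A : Type*} [Ring A]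
    (hNoeth : IsNoetherianRing A) (hPrime : IsPrimeRing A)
    (x : A) (hx0 : x ≠ 0) (hxu : ¬ IsUnit x) (hxn : IsNormalElem x)
    (hxcp : (TwoSidedIdeal.span {x}).IsCompletelyPrime)
    [OreSet (Submonoid.powers x)]
    (P : TwoSidedIdeal A) (hP : P.IsPrimeTS) (hxP : x ∉ P)
    (hPloc : (TwoSidedIdeal.span
        (numeratorHom '' (P : Set A)) :
        TwoSidedIdeal (A[(Submonoid.powers x)⁻¹])).IsPrincipalNormal) :
    P.IsPrincipalNormal :=
  nagata_aux hNoeth hPrime x hx0 hxu hxn hxcp P hP hxP hPloc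
end

section
/- Let A be a prime noetherian ring and x a nonzero, non-unit, normal element of A such that xA is a completely prime ideal. If the localisation A_x of A at the powers of x is a noetherian unique factorisation ring, then so is A. -/
/-! If `x ∈ P`, then `xA ⊆ P` is the required principal prime. Otherwise `P` extends to a nonzero
prime `P Aₓ` of the localisation, which contains a nonzero prime `Q` with a normal generator `u`.
Write `u = c x⁻ⁿ` with `c ∈ A`; by noetherianity `c` can be chosen with `A c` maximal,
and then `x ∤ c`. As `xA` is completely prime, powers of `x` can now be cancelled against `c`,
so the contraction `Q ∩ A` is `cA = Ac`. It is prime (noetherianity again, through an ascending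
chain of left ideals) and lies in `P Aₓ ∩ A = P`. -/

section

open OreLocalization

theorem IsRightRegular.isUnit_of_mul_eq_one {M : Type*} [Monoid M] {x b : M}
    (hx : IsRightRegular x) (h : b * x = 1) : IsUnit x :=
  ⟨⟨x, b, hx (by simp only [mul_assoc, h, mul_one, one_mul]), h⟩, rfl⟩

variable {A : Type*} [Ring A]

namespace IsNormalElem

variable {x u : A}

theorem exists_mul_self_eq_self_mul (hx : IsNormalElem x) (a : A) : ∃ b, a * x = x * b :=
  (Set.ext_iff.mp hx (a * x)).mpr ⟨a, rfl⟩

theorem exists_self_mul_eq_mul_self (hx : IsNormalElem x) (a : A) : ∃ b, x * a = b * x :=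
  (Set.ext_iff.mp hx (x * a)).mp ⟨a, rfl⟩

theorem of_isUnit (hx : IsUnit x) : IsNormalElem x := by
  obtain ⟨w, rfl⟩ := hx
  ext y
  constructor
  · rintro ⟨a, rfl⟩
    exact ⟨w * a * ↑w⁻¹, by simp [mul_assoc]⟩
  · rintro ⟨a, rfl⟩
    exact ⟨↑w⁻¹ * a * w, by simp [mul_assoc]⟩

theorem mul (hx : IsNormalElem x) (hu : IsNormalElem u) : IsNormalElem (x * u) := by
  ext y
  constructor
  · rintro ⟨a, rfl⟩
    obtain ⟨b, hb⟩ := hu.exists_self_mul_eq_mul_self a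
    obtain ⟨c, hc⟩ := hx.exists_self_mul_eq_mul_self b
    exact ⟨c, by rw [mul_assoc, hb, ← mul_assoc, hc, mul_assoc]⟩
  · rintro ⟨a, rfl⟩
    obtain ⟨b, hb⟩ := hx.exists_mul_self_eq_self_mul a
    obtain ⟨c, hc⟩ := hu.exists_mul_self_eq_self_mul b
    exact ⟨c, by rw [← mul_assoc, hb, mul_assoc, hc, mul_assoc]⟩

theorem pow (hx : IsNormalElem x) (n : ℕ) : IsNormalElem (x ^ n) := by
  induction n with
  | zero => exact pow_zero x ▸ of_isUnit isUnit_one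
  | succ n ih => exact pow_succ x n ▸ ih.mul hx

theorem mem_span_singleton_iff (hx : IsNormalElem x) {y : A} :
    y ∈ TwoSidedIdeal.span {x} ↔ ∃ a, y = x * a := by
  let I : TwoSidedIdeal A := .mk' {y | ∃ a, y = x * a} ⟨0, (mul_zero x).symm⟩
    (fun ⟨a, ha⟩ ⟨b, hb⟩ => ⟨a + b, by rw [ha, hb, mul_add]⟩)
    (fun ⟨a, ha⟩ => ⟨-a, by rw [ha, mul_neg]⟩)
    (fun {z _} ⟨a, ha⟩ =>
      let ⟨b, hb⟩ := hx.exists_mul_self_eq_self_mul z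
      ⟨b * a, by rw [ha, ← mul_assoc, hb, mul_assoc]⟩)
    (fun {_ z} ⟨a, ha⟩ => ⟨a * z, by rw [ha, mul_assoc]⟩)
  refine ⟨fun hy => ?_, ?_⟩
  · have hxI : x ∈ I := (TwoSidedIdeal.mem_mk' _ _ _ _ _ _ x).mpr ⟨1, (mul_one x).symm⟩
    exact (TwoSidedIdeal.mem_mk' _ _ _ _ _ _ y).mp
      (TwoSidedIdeal.span_le.mpr (Set.singleton_subset_iff.mpr hxI) hy)
  · rintro ⟨a, rfl⟩
    exact TwoSidedIdeal.mul_mem_right _ _ _ (TwoSidedIdeal.subset_span rfl)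

theorem mem_span_singleton_iff' (hx : IsNormalElem x) {y : A} :
    y ∈ TwoSidedIdeal.span {x} ↔ ∃ a, y = a * x :=
  hx.mem_span_singleton_iff.trans (Set.ext_iff.mp hx y)

end IsNormalElem

theorem IsPrimeRing.isRegular_of_isNormalElem (hA : IsPrimeRing A) {u : A}
    (hu : IsNormalElem u) (hu0 : u ≠ 0) : IsRegular u :=
  ⟨isLeftRegular_of_non_zero_divisor u fun t h => (hA u t fun r => by
      obtain ⟨s, hs⟩ := hu.exists_self_mul_eq_mul_self r
      rw [hs, mul_assoc, h, mul_zero]).resolve_left hu0,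
    isRightRegular_of_non_zero_divisor u fun t h => (hA t u fun r => by
      obtain ⟨s, hs⟩ := hu.exists_mul_self_eq_self_mul r
      rw [mul_assoc, hs, ← mul_assoc, h, zero_mul]).resolve_right hu0⟩

namespace TwoSidedIdeal

variable (I : TwoSidedIdeal A) {w y : A}

theorem mul_mem_iff_of_isUnit_right (hw : IsUnit w) : y * w ∈ I ↔ y ∈ I := by
  obtain ⟨w, rfl⟩ := hw
  exact ⟨fun h => by simpa using I.mul_mem_right _ (↑w⁻¹ : A) h, I.mul_mem_right _ _⟩

theorem mul_mem_iff_of_isUnit_left (hw : IsUnit w) : w * y ∈ I ↔ y ∈ I := by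
  obtain ⟨w, rfl⟩ := hw
  exact ⟨fun h => by simpa using I.mul_mem_left (↑w⁻¹ : A) _ h, I.mul_mem_left _ _⟩

theorem IsCompletelyPrime.isPrimeTS {P : TwoSidedIdeal A} (hP : P.IsCompletelyPrime) :
    P.IsPrimeTS :=
  ⟨hP.1, fun a b hab => hP.2 a b (by simpa using hab 1)⟩

namespace IsPrimeTS

variable {P : TwoSidedIdeal A} (hP : P.IsPrimeTS) {x : A} (hx : IsNormalElem x) (hxP : x ∉ P)
include hP hx hxP

theorem mem_of_mul_mem_left {t : A} (h : x * t ∈ P) : t ∈ P := by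
  refine (hP.2 x t fun r => ?_).resolve_left hxP
  obtain ⟨s, hs⟩ := hx.exists_self_mul_eq_mul_self r
  rw [hs, mul_assoc]
  exact P.mul_mem_left _ _ h

theorem mem_of_mul_mem_right {t : A} (h : t * x ∈ P) : t ∈ P := by
  refine (hP.2 t x fun r => ?_).resolve_right hxP
  obtain ⟨s, hs⟩ := hx.exists_mul_self_eq_self_mul r
  rw [mul_assoc, hs, ← mul_assoc]
  exact P.mul_mem_right _ _ h

theorem pow_notMem (n : ℕ) : x ^ n ∉ P := by
  induction n with
  | zero => exact fun h => hP.1 (P.eq_top (by simpa using h))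
  | succ n ih => exact fun h => ih (hP.mem_of_mul_mem_left hx hxP (pow_succ' x n ▸ h))

end IsPrimeTS

end TwoSidedIdeal

/-- The left ideals `{β | xᵏ β ∈ T}` form an ascending chain; once it is stationary at `N`,
conjugating `t` past `x ^ N` moves it back into `T`. -/
theorem Ideal.mem_of_pow_mul_mem (hNoeth : IsNoetherianRing A) {x : A} (hx : IsNormalElem x)
    {T : Ideal A} (hT : ∀ (n : ℕ) (β : A), β * x ^ n ∈ T ↔ β ∈ T) {n : ℕ} {t : A}
    (ht : x ^ n * t ∈ T) : t ∈ T := by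
  let U : ℕ → Ideal A := fun k =>
    { carrier := {β | x ^ k * β ∈ T}
      add_mem' := fun {p q} (hp : x ^ k * p ∈ T) (hq : x ^ k * q ∈ T) =>
        show x ^ k * (p + q) ∈ T by rw [mul_add]; exact T.add_mem hp hq
      zero_mem' := show x ^ k * 0 ∈ T by rw [mul_zero]; exact T.zero_mem
      smul_mem' := fun r β (hβ : x ^ k * β ∈ T) => show x ^ k * (r * β) ∈ T by
        obtain ⟨r', hr'⟩ := (hx.pow k).exists_self_mul_eq_mul_self r
        rw [← mul_assoc, hr', mul_assoc]
        exact T.mul_mem_left r' hβ }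
  have hU : Monotone U := monotone_nat_of_le_succ fun k β (hβ : x ^ k * β ∈ T) =>
    show x ^ (k + 1) * β ∈ T by rw [pow_succ', mul_assoc]; exact T.mul_mem_left x hβ
  obtain ⟨N, hN⟩ := monotone_stabilizes_iff_noetherian.mpr hNoeth ⟨U, hU⟩
  obtain ⟨w, hw⟩ := (hx.pow N).exists_mul_self_eq_self_mul t
  have hwU : w ∈ U (N + n) := show x ^ (N + n) * w ∈ T by
    rw [add_comm, pow_add, mul_assoc, ← hw, ← mul_assoc, hT]
    exact ht
  have hUN : U N = U (N + n) := hN (N + n) (Nat.le_add_right N n)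
  rw [← hUN] at hwU
  exact (hT N t).mp (hw ▸ hwU)

/-- `Q.IsPrincipalNormal` says exactly that `Q` has a normal generator. -/
def TwoSidedIdeal.IsNormalGenerator (Q : TwoSidedIdeal A) (u : A) : Prop :=
  IsNormalElem u ∧ ∀ y, y ∈ Q ↔ ∃ a, y = u * a

namespace TwoSidedIdeal.IsNormalGenerator

variable {Q : TwoSidedIdeal A} {u w : A} (hu : Q.IsNormalGenerator u)
include hu

theorem mem : u ∈ Q := (hu.2 u).mpr ⟨1, (mul_one u).symm⟩

theorem mem_iff' {y : A} : y ∈ Q ↔ ∃ a, y = a * u := (hu.2 y).trans (Set.ext_iff.mp hu.1 y)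

theorem ne_zero (hQ : Q ≠ ⊥) : u ≠ 0 := by
  rintro rfl
  refine hQ (eq_bot_iff.mpr fun y hy => ?_)
  obtain ⟨a, rfl⟩ := (hu.2 y).mp hy
  exact (TwoSidedIdeal.mem_bot A).mpr (zero_mul a)

theorem unit_mul (hw : IsUnit w) : Q.IsNormalGenerator (w * u) := by
  refine ⟨(IsNormalElem.of_isUnit hw).mul hu.1, fun y => ⟨fun hy => ?_, ?_⟩⟩
  · obtain ⟨a, ha⟩ := (hu.2 _).mp (Q.mul_mem_left (↑hw.unit⁻¹) y hy)
    exact ⟨a, by rw [mul_assoc, ← ha, ← mul_assoc, hw.mul_val_inv, one_mul]⟩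
  · rintro ⟨a, rfl⟩
    exact Q.mul_mem_right _ _ (Q.mul_mem_left _ _ hu.mem)

theorem mul_unit (hw : IsUnit w) : Q.IsNormalGenerator (u * w) := by
  refine ⟨hu.1.mul (IsNormalElem.of_isUnit hw), fun y => ⟨fun hy => ?_, ?_⟩⟩
  · obtain ⟨a, rfl⟩ := (hu.2 y).mp hy
    exact ⟨↑hw.unit⁻¹ * a, by rw [mul_assoc, ← mul_assoc w, hw.mul_val_inv, one_mul]⟩
  · rintro ⟨a, rfl⟩
    rw [mul_assoc]
    exact Q.mul_mem_right _ _ hu.mem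

end TwoSidedIdeal.IsNormalGenerator

section CompletelyPrime

variable {x c : A} (hx : IsNormalElem x) (hxcp : (TwoSidedIdeal.span {x}).IsCompletelyPrime)
  (hcx : c ∉ TwoSidedIdeal.span {x})
include hx hxcp hcx

theorem exists_eq_mul_of_mul_pow_eq (hxr : IsRightRegular x) {m : ℕ} {y b : A}
    (h : y * x ^ m = c * b) :
    ∃ b', y = c * b' := by
  induction m generalizing b with
  | zero => exact ⟨b, by simpa using h⟩
  | succ m ih =>
    have hcb : c * b ∈ TwoSidedIdeal.span {x} :=
      hx.mem_span_singleton_iff'.mpr ⟨y * x ^ m, by rw [← h, pow_succ, mul_assoc]⟩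
    obtain ⟨s, rfl⟩ := hx.mem_span_singleton_iff'.mp ((hxcp.2 c b hcb).resolve_left hcx)
    exact ih (hxr (show y * x ^ m * x = c * s * x by
      rw [mul_assoc, ← pow_succ, h, mul_assoc]))

theorem exists_eq_mul_of_pow_mul_eq (hxl : IsLeftRegular x) {m : ℕ} {y e : A}
    (h : x ^ m * y = e * c) :
    ∃ e', y = e' * c := by
  induction m generalizing e with
  | zero => exact ⟨e, by simpa using h⟩
  | succ m ih =>
    have hec : e * c ∈ TwoSidedIdeal.span {x} :=
      hx.mem_span_singleton_iff.mpr ⟨x ^ m * y, by rw [← h, pow_succ', mul_assoc]⟩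
    obtain ⟨s, rfl⟩ := hx.mem_span_singleton_iff.mp ((hxcp.2 e c hec).resolve_right hcx)
    exact ih (hxl (show x * (x ^ m * y) = x * (s * c) by
      rw [← mul_assoc, ← pow_succ', h, mul_assoc]))

end CompletelyPrime

section Localization

variable {x : A} [OreSet (Submonoid.powers x)]

local notation "Aₓ" => A[(Submonoid.powers x)⁻¹]
local notation "φ" => (numeratorRingHom : A →+* Aₓ)

theorem isUnit_numerator_self : IsUnit (φ x) :=
  numerator_isUnit (⟨x, Submonoid.mem_powers x⟩ : Submonoid.powers x)

theorem exists_pow_mul_eq_numerator (y : Aₓ) : ∃ (e : A) (m : ℕ), φ x ^ m * y = φ e := by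
  induction y using OreLocalization.ind with
  | _ r s =>
    obtain ⟨m, hm⟩ := (Submonoid.mem_powers_iff (s : A) x).mp s.2
    refine ⟨r, m, ?_⟩
    rw [← map_pow, hm]
    exact OreLocalization.mul_cancel

theorem exists_mul_pow_eq_numerator (hx : IsNormalElem x) (y : Aₓ) :
    ∃ (r : A) (n : ℕ), y * φ x ^ n = φ r := by
  obtain ⟨e, m, he⟩ := exists_pow_mul_eq_numerator y
  obtain ⟨b, hb⟩ := (hx.pow m).exists_mul_self_eq_self_mul e
  refine ⟨b, m, (isUnit_numerator_self.pow m).mul_left_cancel ?_⟩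
  rw [← mul_assoc, he, ← map_pow, ← map_mul, ← map_mul, hb]

theorem numerator_injective (hA : IsPrimeRing A) (hx : IsNormalElem x) (hx0 : x ≠ 0) :
    Function.Injective φ := by
  refine numeratorHom_inj (le_nonZeroDivisorsLeft_iff_isLeftRegular.mpr ?_)
  rintro ⟨_, n, rfl⟩
  exact ((hA.isRegular_of_isNormalElem hx hx0).pow n).left

section Extension

variable {P : TwoSidedIdeal A}

theorem exists_twoSidedIdeal_mem_iff_mul_pow (hx : IsNormalElem x) (hP : P.IsPrimeTS)
    (hxP : x ∉ P) :
    ∃ E : TwoSidedIdeal Aₓ, ∀ y, y ∈ E ↔ ∃ n : ℕ, ∃ p ∈ P, y * φ x ^ n = φ p := by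
  have mul_pow : ∀ {y : Aₓ} {n : ℕ} {p : A} (k : ℕ),
      y * φ x ^ n = φ p → y * φ x ^ (n + k) = φ (p * x ^ k) := by
    intro y n p k h
    rw [pow_add, ← mul_assoc, h, map_mul, map_pow]
  refine ⟨.mk' {y | ∃ n : ℕ, ∃ p ∈ P, y * φ x ^ n = φ p} ⟨0, 0, P.zero_mem, by simp⟩
    ?_ ?_ ?_ ?_, fun y => TwoSidedIdeal.mem_mk' _ _ _ _ _ _ y⟩
  · rintro y₁ y₂ ⟨n₁, p₁, hp₁, h₁⟩ ⟨n₂, p₂, hp₂, h₂⟩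
    refine ⟨n₁ + n₂, p₁ * x ^ n₂ + p₂ * x ^ n₁,
      P.add_mem (P.mul_mem_right _ _ hp₁) (P.mul_mem_right _ _ hp₂), ?_⟩
    rw [add_mul, mul_pow n₂ h₁, add_comm n₁, mul_pow n₁ h₂, map_add]
  · rintro y ⟨n, p, hp, h⟩
    exact ⟨n, -p, P.neg_mem hp, by rw [neg_mul, h, map_neg]⟩
  · rintro z y ⟨n, p, hp, h⟩
    obtain ⟨r, m, hr⟩ := exists_mul_pow_eq_numerator hx z
    obtain ⟨p', hp'⟩ := (hx.pow m).exists_mul_self_eq_self_mul p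
    have hp'P : p' ∈ P := hP.mem_of_mul_mem_left (hx.pow m) (hP.pow_notMem hx hxP m)
      (hp' ▸ P.mul_mem_right _ _ hp)
    refine ⟨n + m, r * p', P.mul_mem_left _ _ hp'P, ?_⟩
    rw [mul_assoc, mul_pow m h, hp', map_mul, map_pow, ← mul_assoc, hr, map_mul]
  · rintro y z ⟨n, p, hp, h⟩
    obtain ⟨r, m, hr⟩ := exists_mul_pow_eq_numerator hx z
    obtain ⟨r', hr'⟩ := (hx.pow n).exists_mul_self_eq_self_mul r
    refine ⟨m + n, p * r', P.mul_mem_right _ _ hp, ?_⟩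
    rw [pow_add, mul_assoc, ← mul_assoc z, hr, ← map_pow, ← map_mul, hr', map_mul, map_pow,
      ← mul_assoc, h, map_mul]

theorem comap_map_numerator (hA : IsPrimeRing A) (hx : IsNormalElem x) (hx0 : x ≠ 0)
    (hP : P.IsPrimeTS) (hxP : x ∉ P) : (P.map φ).comap φ = P := by
  obtain ⟨E, hE⟩ := exists_twoSidedIdeal_mem_iff_mul_pow hx hP hxP
  have hPE : P.map φ ≤ E := TwoSidedIdeal.span_le.mpr <| by
    rintro _ ⟨p, hp, rfl⟩
    exact (hE _).mpr ⟨0, p, hp, by simp⟩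
  refine le_antisymm (fun a ha => ?_)
    (fun a ha => (TwoSidedIdeal.mem_comap _).mpr (TwoSidedIdeal.subset_span ⟨a, ha, rfl⟩))
  obtain ⟨n, p, hp, h⟩ := (hE _).mp (hPE ((TwoSidedIdeal.mem_comap _).mp ha))
  rw [← map_pow, ← map_mul] at h
  exact hP.mem_of_mul_mem_right (hx.pow n) (hP.pow_notMem hx hxP n)
    (numerator_injective hA hx hx0 h ▸ hp)

theorem map_numerator_isPrimeTS (hA : IsPrimeRing A) (hx : IsNormalElem x) (hx0 : x ≠ 0)
    (hP : P.IsPrimeTS) (hxP : x ∉ P) : (P.map φ).IsPrimeTS := by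
  have hPE := comap_map_numerator hA hx hx0 hP hxP
  have mem_map {a : A} (ha : a ∈ P) : φ a ∈ P.map φ :=
    (TwoSidedIdeal.mem_comap _).mp (hPE.symm ▸ ha)
  refine ⟨fun htop => hP.1 (P.eq_top ?_), fun a b hab => ?_⟩
  · rw [← hPE, TwoSidedIdeal.mem_comap, htop]
    trivial
  obtain ⟨a₀, n, ha⟩ := exists_mul_pow_eq_numerator hx a
  obtain ⟨b₀, m, hb⟩ := exists_pow_mul_eq_numerator b
  have hab₀ : ∀ t, a₀ * t * b₀ ∈ P := fun t => by
    rw [← hPE, TwoSidedIdeal.mem_comap, map_mul, map_mul, ← ha, ← hb]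
    simpa only [mul_assoc] using hab (φ x ^ n * φ t * φ x ^ m)
  refine (hP.2 a₀ b₀ hab₀).imp (fun h => ?_) (fun h => ?_)
  · rw [← (P.map φ).mul_mem_iff_of_isUnit_right (isUnit_numerator_self.pow n), ha]
    exact mem_map h
  · rw [← (P.map φ).mul_mem_iff_of_isUnit_left (isUnit_numerator_self.pow m), hb]
    exact mem_map h

theorem map_numerator_ne_bot (hA : IsPrimeRing A) (hx : IsNormalElem x) (hx0 : x ≠ 0)
    (hP : P.IsPrimeTS) (hxP : x ∉ P) (hPbot : P ≠ ⊥) : P.map φ ≠ ⊥ := by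
  intro hbot
  refine hPbot (eq_bot_iff.mpr fun p hp => ?_)
  rw [← comap_map_numerator hA hx hx0 hP hxP, hbot, TwoSidedIdeal.mem_comap,
    TwoSidedIdeal.mem_bot] at hp
  exact (TwoSidedIdeal.mem_bot _).mpr (numerator_injective hA hx hx0 (hp.trans (map_zero _).symm))

end Extension

theorem comap_numerator_isPrimeTS (hNoeth : IsNoetherianRing A) (hx : IsNormalElem x)
    {Q : TwoSidedIdeal Aₓ} (hQ : Q.IsPrimeTS) : (Q.comap φ).IsPrimeTS := by
  refine ⟨fun htop => hQ.1 (Q.eq_top ?_), fun a b hab => ?_⟩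
  · rw [← map_one φ, ← TwoSidedIdeal.mem_comap, htop]
    trivial
  simp only [TwoSidedIdeal.mem_comap] at hab ⊢
  let T : Ideal A :=
    { carrier := {β | ∀ ρ, φ (a * ρ * β) ∈ Q}
      add_mem' := fun hp hq ρ => by simpa only [mul_add, map_add] using Q.add_mem (hp ρ) (hq ρ)
      zero_mem' := fun ρ => by simp
      smul_mem' := fun r β hβ ρ => by simpa only [smul_eq_mul, mul_assoc] using hβ (ρ * r) }
  have hT : ∀ (n : ℕ) (β : A), β * x ^ n ∈ T ↔ β ∈ T := fun n β =>
    forall_congr' fun ρ => by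
      rw [← mul_assoc, map_mul, map_pow,
        Q.mul_mem_iff_of_isUnit_right (isUnit_numerator_self.pow n)]
  refine hQ.2 _ _ fun s => ?_
  obtain ⟨r, m, hr⟩ := exists_mul_pow_eq_numerator hx s
  obtain ⟨t, ht⟩ := (hx.pow m).exists_mul_self_eq_self_mul b
  have htT : t ∈ T := Ideal.mem_of_pow_mul_mem hNoeth hx hT (ht ▸ (hT m b).mpr hab)
  rw [← Q.mul_mem_iff_of_isUnit_right (isUnit_numerator_self.pow m), mul_assoc, ← map_pow,
    ← map_mul, ht, map_mul, ← mul_assoc, mul_assoc _ s, map_pow, hr, ← map_mul, ← map_mul]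
  exact htT r

theorem isNormalGenerator_comap_numerator (hA : IsPrimeRing A) (hx : IsNormalElem x)
    (hx0 : x ≠ 0) (hxcp : (TwoSidedIdeal.span {x}).IsCompletelyPrime) {Q : TwoSidedIdeal Aₓ}
    {c : A} (hc : Q.IsNormalGenerator (φ c)) (hcx : c ∉ TwoSidedIdeal.span {x}) :
    (Q.comap φ).IsNormalGenerator c := by
  have hxr := hA.isRegular_of_isNormalElem hx hx0
  have hinj := numerator_injective hA hx hx0
  have hright : ∀ y, y ∈ Q.comap φ ↔ ∃ a, y = c * a := fun y => by
    rw [TwoSidedIdeal.mem_comap]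
    refine ⟨fun hy => ?_, ?_⟩
    · obtain ⟨s, hs⟩ := (hc.2 _).mp hy
      obtain ⟨b, k, hb⟩ := exists_mul_pow_eq_numerator hx s
      refine exists_eq_mul_of_mul_pow_eq hx hxcp hcx hxr.right (m := k) (b := b) (hinj ?_)
      rw [map_mul, map_pow, hs, mul_assoc, hb, map_mul]
    · rintro ⟨a, rfl⟩
      rw [map_mul]
      exact Q.mul_mem_right _ _ hc.mem
  have hleft : ∀ y, y ∈ Q.comap φ ↔ ∃ a, y = a * c := fun y => by
    rw [TwoSidedIdeal.mem_comap]
    refine ⟨fun hy => ?_, ?_⟩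
    · obtain ⟨s, hs⟩ := hc.mem_iff'.mp hy
      obtain ⟨e, k, he⟩ := exists_pow_mul_eq_numerator s
      refine exists_eq_mul_of_pow_mul_eq hx hxcp hcx hxr.left (m := k) (e := e) (hinj ?_)
      rw [map_mul, map_pow, hs, ← mul_assoc, he, map_mul]
    · rintro ⟨a, rfl⟩
      rw [map_mul]
      exact Q.mul_mem_left _ _ hc.mem
  exact ⟨Set.ext fun y => (hright y).symm.trans (hleft y), hright⟩

/-- Among the `c` with `φ c` generating `Q`, one with `A c` maximal is not divisible by `x`:
if `c = x c'`, then `φ c' = (φ x)⁻¹ φ c` also generates `Q`, and `A c = A c'` forces `x` to be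
invertible. -/
theorem exists_numerator_isNormalGenerator_notMem_span (hNoeth : IsNoetherianRing A)
    (hA : IsPrimeRing A) (hAx : IsPrimeRing Aₓ) (hx : IsNormalElem x) (hx0 : x ≠ 0)
    (hxu : ¬IsUnit x) {Q : TwoSidedIdeal Aₓ} (hQ : Q ≠ ⊥) {u : Aₓ} (hu : Q.IsNormalGenerator u) :
    ∃ c, Q.IsNormalGenerator (φ c) ∧ c ∉ TwoSidedIdeal.span {x} := by
  obtain ⟨c₀, n, hc₀⟩ := exists_mul_pow_eq_numerator hx u
  obtain ⟨_, ⟨c, hc, rfl⟩, hmax⟩ := set_has_maximal_iff_noetherian.mpr hNoeth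
    ((fun c : A => Submodule.span A {c}) '' {c | Q.IsNormalGenerator (φ c)})
    ⟨_, c₀, show Q.IsNormalGenerator (φ c₀) from hc₀ ▸ hu.mul_unit (isUnit_numerator_self.pow n),
      rfl⟩
  refine ⟨c, hc, fun hcx => ?_⟩
  obtain ⟨c', rfl⟩ := hx.mem_span_singleton_iff.mp hcx
  have hc' : Q.IsNormalGenerator (φ c') := by
    have := hc.unit_mul (isUnit_numerator_self (x := x)).unit⁻¹.isUnit
    rwa [map_mul, ← mul_assoc, IsUnit.val_inv_mul, one_mul] at this
  have hspan : Submodule.span A {x * c'} = Submodule.span A {c'} :=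
    ((Submodule.span_singleton_le_iff_mem _ _).mpr
      (Submodule.mem_span_singleton.mpr ⟨x, rfl⟩)).eq_of_not_lt (hmax _ ⟨c', hc', rfl⟩)
  obtain ⟨b, hb⟩ := Submodule.mem_span_singleton.mp (hspan ▸ Submodule.mem_span_singleton_self c')
  have hc'reg : IsRightRegular (φ c') :=
    (hAx.isRegular_of_isNormalElem hc'.1 (hc'.ne_zero hQ)).right
  refine hxu ((hA.isRegular_of_isNormalElem hx hx0).right.isUnit_of_mul_eq_one (b := b)
    (numerator_injective hA hx hx0 (hc'reg ?_)))
  show φ (b * x) * φ c' = φ 1 * φ c'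
  rw [← map_mul, ← map_mul, mul_assoc, one_mul]
  exact congrArg φ hb

end Localization

end

open OreLocalization in
/-- Nagata's lemma, part (ii): if the localisation `A_x` of `A` at the powers of a
nonzero non-unit normal element `x` generating a completely prime ideal is a noetherian
UFR, then so is `A`. -/
theorem nagata_part_ii {A : Type*} [Ring A]
    (hNoeth : IsNoetherianRing A) (hPrime : IsPrimeRing A)
    (x : A) (hx0 : x ≠ 0) (hxu : ¬ IsUnit x) (hxn : IsNormalElem x)
    (hxcp : (TwoSidedIdeal.span {x}).IsCompletelyPrime)
    [OreSet (Submonoid.powers x)]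
    (hloc : IsNoethUFR (A[(Submonoid.powers x)⁻¹])) :
    IsNoethUFR A := by
  refine ⟨hPrime, hNoeth, fun P hP hPbot => ?_⟩
  by_cases hxP : x ∈ P
  · have hgen : (TwoSidedIdeal.span {x}).IsNormalGenerator x :=
      ⟨hxn, fun _ => hxn.mem_span_singleton_iff⟩
    exact ⟨_, fun h => hx0 (by simpa [h] using hgen.mem), hxcp.isPrimeTS, ⟨x, hgen⟩,
      TwoSidedIdeal.span_le.mpr (Set.singleton_subset_iff.mpr hxP)⟩
  obtain ⟨Q, hQbot, hQ, ⟨u, hu⟩, hQP⟩ := hloc.2.2 (P.map numeratorRingHom)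
    (map_numerator_isPrimeTS hPrime hxn hx0 hP hxP)
    (map_numerator_ne_bot hPrime hxn hx0 hP hxP hPbot)
  obtain ⟨c, hc, hcx⟩ :=
    exists_numerator_isNormalGenerator_notMem_span hNoeth hPrime hloc.1 hxn hx0 hxu hQbot hu
  have hgen := isNormalGenerator_comap_numerator hPrime hxn hx0 hxcp hc hcx
  refine ⟨Q.comap numeratorRingHom, fun h => hc.ne_zero hQbot ?_,
    comap_numerator_isPrimeTS hNoeth hxn hQ, ⟨c, hgen⟩, ?_⟩
  · have hc0 : c ∈ (⊥ : TwoSidedIdeal A) := h ▸ hgen.mem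
    rw [(TwoSidedIdeal.mem_bot A).mp hc0, map_zero]
  · rw [← comap_map_numerator hPrime hxn hx0 hP hxP]
    exact TwoSidedIdeal.comap_le_comap _ hQP
end

section
/- Let R be a prime noetherian ring and suppose d, s are normal elements of R such that dR is a prime ideal and s ∉ dR. Then there exist units u, v in R such that ds = sdu and sd = vds. -/
/-- If `d, s` are normal elements of a prime noetherian ring `R` with `dR` prime and
`s ∉ dR`, then there are units `u, v` with `ds = sdu` and `sd = vds`. -/
theorem units_commutation {R : Type*} [Ring R]
    (hNoeth : IsNoetherianRing R) (hPrime : IsPrimeRing R)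
    (d s : R) (hd : IsNormalElem d) (hs : IsNormalElem s)
    (hdp : (TwoSidedIdeal.span {d}).IsPrimeTS)
    (hsd : s ∉ TwoSidedIdeal.span {d}) :
    ∃ u v : R, IsUnit u ∧ IsUnit v ∧ d * s = s * d * u ∧ s * d = v * (d * s) := by
  -- normality in usable form
  have hd1 : ∀ a : R, ∃ b, d * a = b * d := by
    intro a
    have h : d * a ∈ {y : R | ∃ c, y = d * c} := ⟨a, rfl⟩
    rw [hd] at h; exact h
  have hd2 : ∀ a : R, ∃ b, a * d = d * b := by
    intro a
    have h : a * d ∈ {y : R | ∃ c, y = c * d} := ⟨a, rfl⟩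
    rw [← hd] at h; exact h
  have hs1 : ∀ a : R, ∃ b, s * a = b * s := by
    intro a
    have h : s * a ∈ {y : R | ∃ c, y = s * c} := ⟨a, rfl⟩
    rw [hs] at h; exact h
  have hs2 : ∀ a : R, ∃ b, a * s = s * b := by
    intro a
    have h : a * s ∈ {y : R | ∃ c, y = c * s} := ⟨a, rfl⟩
    rw [← hs] at h; exact h
  -- the span of {d} is exactly d*R
  have hP : ∀ y : R, y ∈ TwoSidedIdeal.span {d} ↔ ∃ a, y = d * a := by
    have hI : ∀ y : R, y ∈ TwoSidedIdeal.mk' {y : R | ∃ a, y = d * a}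
        ⟨0, (mul_zero d).symm⟩
        (fun {x y} ⟨a, ha⟩ ⟨b, hb⟩ => ⟨a + b, by rw [ha, hb, mul_add]⟩)
        (fun {x} ⟨a, ha⟩ => ⟨-a, by rw [ha, mul_neg]⟩)
        (fun {x y} ⟨a, ha⟩ => by
          obtain ⟨b, hb⟩ := hd2 x
          exact ⟨b * a, by rw [ha, ← mul_assoc, hb, mul_assoc]⟩)
        (fun {x y} ⟨a, ha⟩ => ⟨a * y, by rw [ha, mul_assoc]⟩) ↔ ∃ a, y = d * a :=
      fun y => TwoSidedIdeal.mem_mk' _ _ _ _ _ _ y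
    intro y
    constructor
    · intro hy
      exact (hI y).mp (TwoSidedIdeal.mem_span_iff.mp hy _
        (fun z hz => by
          rw [Set.mem_singleton_iff] at hz
          exact (hI z).mpr ⟨1, by rw [hz, mul_one]⟩))
    · rintro ⟨a, rfl⟩
      exact TwoSidedIdeal.mul_mem_right _ _ _
        (TwoSidedIdeal.subset_span (Set.mem_singleton d))
  -- trivial case d = 0
  by_cases hd0 : d = 0
  · exact ⟨1, 1, isUnit_one, isUnit_one, by simp [hd0], by simp [hd0]⟩
  -- s ≠ 0
  have hs0 : s ≠ 0 := fun h => hsd (h ▸ ((hP 0).mpr ⟨0, (mul_zero d).symm⟩))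
  -- regularity of s and d
  have sregl : ∀ r : R, s * r = 0 → r = 0 := by
    intro r hr
    rcases hPrime s r (fun x => by
      obtain ⟨y, hy⟩ := hs1 x
      rw [hy, mul_assoc, hr, mul_zero]) with h | h
    · exact absurd h hs0
    · exact h
  have sregr : ∀ r : R, r * s = 0 → r = 0 := by
    intro r hr
    rcases hPrime r s (fun x => by
      obtain ⟨y, hy⟩ := hs2 x
      rw [mul_assoc, hy, ← mul_assoc, hr, zero_mul]) with h | h
    · exact h
    · exact absurd h hs0
  have dregl : ∀ r : R, d * r = 0 → r = 0 := by
    intro r hr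
    rcases hPrime d r (fun x => by
      obtain ⟨y, hy⟩ := hd1 x
      rw [hy, mul_assoc, hr, mul_zero]) with h | h
    · exact absurd h hd0
    · exact h
  have dregr : ∀ r : R, r * d = 0 → r = 0 := by
    intro r hr
    rcases hPrime r d (fun x => by
      obtain ⟨y, hy⟩ := hd2 x
      rw [mul_assoc, hy, ← mul_assoc, hr, zero_mul]) with h | h
    · exact h
    · exact absurd h hd0
  -- ds = s * d * x for some x
  obtain ⟨c, hc⟩ := hd1 s
  clear hc c
  obtain ⟨c, hc⟩ := hs2 d  -- d * s = s * c
  have hcP : ∃ a, c = d * a := by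
    rcases hdp.2 s c (fun r => by
      obtain ⟨r', hr'⟩ := hs1 r     -- s * r = r' * s
      obtain ⟨r'', hr''⟩ := hd2 r'  -- r' * d = d * r''
      refine (hP _).mpr ⟨r'' * s, ?_⟩
      rw [hr', mul_assoc, ← hc, ← mul_assoc, hr'', mul_assoc]) with h | h
    · exact absurd h hsd
    · exact (hP c).mp h
  obtain ⟨x, hx0⟩ := hcP
  have hx : d * s = s * d * x := by rw [hc, hx0, ← mul_assoc]
  -- sd = B * (d * s) for some B
  obtain ⟨c₂, hc₂⟩ := hs1 d  -- s * d = c₂ * s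
  have hc₂P : ∃ a, c₂ = d * a := by
    rcases hdp.2 c₂ s (fun r => by
      obtain ⟨r₂, hr₂⟩ := hs2 r    -- r * s = s * r₂
      obtain ⟨s₂, hs₂'⟩ := hd2 s   -- s * d = d * s₂
      refine (hP _).mpr ⟨s₂ * r₂, ?_⟩
      rw [mul_assoc, hr₂, ← mul_assoc, ← hc₂, hs₂', mul_assoc]) with h | h
    · exact (hP c₂).mp h
    · exact absurd h hsd
  obtain ⟨e, he⟩ := hc₂P
  obtain ⟨B, hB0⟩ := hd1 e  -- d * e = B * d
  have hB : s * d = B * (d * s) := by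
    rw [hc₂, he, hB0, mul_assoc]
  -- sd = (d * s) * y for some y
  obtain ⟨B₂, hB₂⟩ := hd2 B   -- B * d = d * B₂
  obtain ⟨B₃, hB₃⟩ := hs2 B₂  -- B₂ * s = s * B₃
  have hy : s * d = d * s * B₃ := by
    rw [hB, ← mul_assoc, hB₂, mul_assoc, hB₃, ← mul_assoc]
  set y := B₃ with hydef
  -- ds = w * (s * d) for some w
  obtain ⟨x', hx'⟩ := hd1 x   -- d * x = x' * d
  obtain ⟨w, hw0⟩ := hs1 x'   -- s * x' = w * s
  have hw : d * s = w * (s * d) := by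
    rw [hx, mul_assoc, hx', ← mul_assoc, hw0, mul_assoc]
  -- cancellation lemmas
  have dsregl : ∀ r : R, d * s * r = 0 → r = 0 := fun r hr =>
    sregl r (dregl _ (by rw [← mul_assoc]; exact hr))
  have dsregr : ∀ r : R, r * (d * s) = 0 → r = 0 := fun r hr =>
    dregr _ (sregr _ (by rw [mul_assoc]; exact hr))
  have sdregl : ∀ r : R, s * d * r = 0 → r = 0 := fun r hr =>
    dregl r (sregl _ (by rw [← mul_assoc]; exact hr))
  -- x is a unit
  have hyx : y * x = 1 := by
    have : d * s * (y * x - 1) = 0 := by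
      rw [mul_sub, mul_one, ← mul_assoc, ← hy, ← hx, sub_self]
    have h1 := dsregl _ this
    exact sub_eq_zero.mp h1
  have hxy : x * y = 1 := by
    have : s * d * (x * y - 1) = 0 := by
      rw [mul_sub, mul_one, ← mul_assoc, ← hx, ← hy, sub_self]
    have h1 := sdregl _ this
    exact sub_eq_zero.mp h1
  have hxu : IsUnit x := ⟨⟨x, y, hxy, hyx⟩, rfl⟩
  -- B is a unit
  have sdregr : ∀ r : R, r * (s * d) = 0 → r = 0 := fun r hr =>
    sregr _ (dregr _ (by rw [mul_assoc]; exact hr))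
  have hBw : B * w = 1 := by
    have h0 : (B * w - 1) * (s * d) = 0 := by
      rw [sub_mul, one_mul, mul_assoc, ← hw, ← hB, sub_self]
    exact sub_eq_zero.mp (sdregr _ h0)
  have hwB : w * B = 1 := by
    have h0 : (w * B - 1) * (d * s) = 0 := by
      rw [sub_mul, one_mul, mul_assoc, ← hB, ← hw, sub_self]
    exact sub_eq_zero.mp (dsregr _ h0)
  have hBu : IsUnit B := ⟨⟨B, w, hBw, hwB⟩, rfl⟩
  exact ⟨x, B, hxu, hBu, hx, hB⟩
end

section
/- Let R be a prime noetherian ring and suppose d_1, ..., d_t are nonzero normal elements of R such that the ideals d_1R, ..., d_tR are completely prime and pairwise distinct. Let T be the right quotient ring of R with respect to the right denominator set generated by d_1, ..., d_t. If T is a noetherian UFR then so is R; and if T is a noetherian UFD then so is R. -/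
open OreLocalization

namespace Aux

variable {R : Type*} [Ring R] {S : Submonoid R} [OreSet S]

lemma normal_swap_r {x : R} (hx : IsNormalElem x) (a : R) : ∃ b, x * a = b * x := by
  have : x * a ∈ {y | ∃ a, y = x * a} := ⟨a, rfl⟩
  rw [hx] at this
  obtain ⟨b, hb⟩ := this
  exact ⟨b, hb⟩

lemma normal_swap_l {x : R} (hx : IsNormalElem x) (a : R) : ∃ b, a * x = x * b := by
  have : a * x ∈ {y | ∃ a, y = a * x} := ⟨a, rfl⟩
  rw [← hx] at this
  obtain ⟨b, hb⟩ := this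
  exact ⟨b, hb⟩

lemma normal_one : IsNormalElem (1 : R) := by
  unfold IsNormalElem
  simp [eq_comm]

lemma normal_mul {x y : R} (hx : IsNormalElem x) (hy : IsNormalElem y) :
    IsNormalElem (x * y) := by
  ext z
  constructor
  · rintro ⟨a, rfl⟩
    obtain ⟨b, hb⟩ := normal_swap_r hy a
    obtain ⟨c, hc⟩ := normal_swap_r hx b
    exact ⟨c, by rw [mul_assoc, hb, ← mul_assoc, hc, mul_assoc]⟩
  · rintro ⟨a, rfl⟩
    obtain ⟨b, hb⟩ := normal_swap_l hx a
    obtain ⟨c, hc⟩ := normal_swap_l hy b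
    exact ⟨c, by rw [← mul_assoc, hb, mul_assoc, hc, ← mul_assoc]⟩

-- φ structure
lemma phi_mul (a b : R) : (a * b) /ₒ (1 : S) = (a /ₒ 1) * (b /ₒ 1) := mul_div_one.symm

lemma phi_add (a b : R) : (a + b) /ₒ (1 : S) = (a /ₒ 1) + (b /ₒ 1) := add_oreDiv.symm

lemma phi_one : (1 : R) /ₒ (1 : S) = 1 := OreLocalization.one_def.symm

lemma phi_zero : (0 : R) /ₒ (1 : S) = 0 := zero_oreDiv' 1

lemma clear_denom (z : R) (s : S) : ((s : R) /ₒ (1 : S)) * (z /ₒ s) = z /ₒ (1 : S) :=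
  OreLocalization.mul_cancel

lemma inv_mul_phi (z : R) (s : S) : ((1 : R) /ₒ s) * (z /ₒ (1 : S)) = z /ₒ s := by
  rw [OreLocalization.one_div_mul, one_mul]

lemma inv_phi_cancel (s : S) : ((1:R) /ₒ s) * ((s : R) /ₒ (1 : S)) = 1 := by
  rw [OreLocalization.one_div_mul, one_mul, OreLocalization.div_eq_one]

lemma phi_inv_cancel (s : S) : ((s : R) /ₒ (1 : S)) * ((1:R) /ₒ s) = 1 := by
  have := clear_denom (R := R) (S := S) 1 s
  rwa [phi_one] at this

lemma unit_left_cancel (s : S) {y z : R[S⁻¹]}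
    (h : ((s:R) /ₒ (1:S)) * y = ((s:R) /ₒ (1:S)) * z) : y = z := by
  have h2 := congrArg (fun w => ((1:R) /ₒ s) * w) h
  rwa [← mul_assoc, ← mul_assoc, inv_phi_cancel, one_mul, one_mul] at h2

end Aux

namespace Aux2
open Aux
variable {R : Type*} [Ring R] {S : Submonoid R} [OreSet S]

lemma mem_shift (I : TwoSidedIdeal (R[S⁻¹])) (z : R) (s : S) :
    z /ₒ s ∈ I ↔ z /ₒ (1 : S) ∈ I := by
  constructor
  · intro h
    rw [← clear_denom z s]
    exact I.mul_mem_left _ _ h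
  · intro h
    rw [← inv_mul_phi z s]
    exact I.mul_mem_left _ _ h

lemma phi_inj (hRL : ∀ (s : S) (x : R), (s:R) * x = 0 → x = 0)
    {x y : R} (h : x /ₒ (1 : S) = y /ₒ (1 : S)) : x = y := by
  rw [oreDiv_eq_iff] at h
  obtain ⟨u, v, h₁, h₂⟩ := h
  simp only [Submonoid.smul_def, smul_eq_mul, OneMemClass.coe_one, mul_one] at h₁ h₂
  have h3 : (u : R) * (y - x) = 0 := by
    rw [mul_sub, h₁, h₂, sub_self]
  exact (sub_eq_zero.mp (hRL u _ h3)).symm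

lemma conj_mem
    (hNoeth : IsNoetherianRing R)
    (hN : ∀ s : S, IsNormalElem (s : R))
    (hRL : ∀ (s : S) (x : R), (s:R) * x = 0 → x = 0)
    (Q : TwoSidedIdeal (R[S⁻¹])) (a b : R)
    (H : ∀ r : R, (a * r * b) /ₒ (1 : S) ∈ Q)
    (s : S) (a₂ : R) (ha₂ : (s : R) * a = a₂ * (s : R)) :
    ∀ r : R, (a₂ * r * b) /ₒ (1 : S) ∈ Q := by
  set B : Set R := {y | ∀ r : R, (y * r * b) /ₒ (1 : S) ∈ Q} with hB
  have hBzero : (0 : R) ∈ B := by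
    intro r
    simp only [zero_mul]
    rw [phi_zero]
    exact Q.zero_mem
  have hBadd : ∀ {y y'}, y ∈ B → y' ∈ B → y + y' ∈ B := by
    intro y y' hy hy' r
    have : (y + y') * r * b = y * r * b + y' * r * b := by
      rw [add_mul, add_mul]
    rw [this, phi_add]
    exact Q.add_mem (hy r) (hy' r)
  have hBmull : ∀ (x : R) {y}, y ∈ B → x * y ∈ B := by
    intro x y hy r
    have : x * y * r * b = x * (y * r * b) := by
      rw [mul_assoc x y r, mul_assoc x (y * r) b]
    rw [this, phi_mul]
    exact Q.mul_mem_left _ _ (hy r)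
  have hBconj : ∀ (t : S) {y y'}, y ∈ B → (t : R) * y' = y * (t : R) → y' ∈ B := by
    intro t y y' hy hty' r
    have key : (t : R) * (y' * r * b) = y * ((t : R) * r) * b := by
      simp only [← mul_assoc]
      rw [hty']
    have h1 : ((t : R) /ₒ (1 : S)) * ((y' * r * b) /ₒ (1 : S)) ∈ Q := by
      rw [← phi_mul, key]
      exact hy _
    have h2 := Q.mul_mem_left ((1 : R) /ₒ t) _ h1
    rwa [← mul_assoc, inv_phi_cancel, one_mul] at h2
  -- the ascending chain
  have coe_pow : ∀ n : ℕ, ((s ^ n : S) : R) = (s : R) ^ n := fun n => by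
    exact SubmonoidClass.coe_pow s n
  set C : ℕ → Submodule R R := fun n =>
    { carrier := {w | ∃ y ∈ B, w * ((s ^ n : S) : R) = ((s ^ n : S) : R) * y}
      add_mem' := by
        rintro w w' ⟨y, hy, hw⟩ ⟨y', hy', hw'⟩
        exact ⟨y + y', hBadd hy hy', by rw [add_mul, mul_add, hw, hw']⟩
      zero_mem' := ⟨0, hBzero, by rw [zero_mul, mul_zero]⟩
      smul_mem' := by
        rintro x w ⟨y, hy, hw⟩
        obtain ⟨x₂, hx₂⟩ := normal_swap_l (hN (s ^ n)) x
        refine ⟨x₂ * y, hBmull x₂ hy, ?_⟩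
        have : (x • w) * ((s ^ n : S) : R) = x * (w * ((s ^ n : S) : R)) := by
          rw [smul_eq_mul, mul_assoc]
        rw [this, hw, ← mul_assoc, hx₂, mul_assoc]} with hC
  have hCmem : ∀ (n : ℕ) (w : R),
      w ∈ C n ↔ ∃ y ∈ B, w * ((s ^ n : S) : R) = ((s ^ n : S) : R) * y := by
    intro n w; rfl
  have hpowsucc : ∀ n : ℕ, ((s ^ (n+1) : S) : R) = ((s ^ n : S) : R) * (s : R) := by
    intro n
    rw [pow_succ, Submonoid.coe_mul]
  have hCmono : ∀ n, C n ≤ C (n + 1) := by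
    intro n w hw
    rw [hCmem] at hw ⊢
    obtain ⟨y, hy, hw⟩ := hw
    obtain ⟨y', hy'⟩ := normal_swap_l (hN s) y
    refine ⟨y', hBconj s hy hy'.symm, ?_⟩
    rw [hpowsucc, ← mul_assoc, hw, mul_assoc, hy', ← mul_assoc]
  obtain ⟨n, hn⟩ := monotone_stabilizes_iff_noetherian.mpr hNoeth
    ⟨C, monotone_nat_of_le_succ hCmono⟩
  -- the witness
  obtain ⟨w, hwdef⟩ := normal_swap_r (hN (s ^ n)) a₂
  have hwC : w ∈ C (n + 1) := by
    rw [hCmem]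
    refine ⟨a, H, ?_⟩
    rw [hpowsucc, ← mul_assoc, ← hwdef, mul_assoc, show a₂ * (s : R) = (s : R) * a from ha₂.symm,
      ← mul_assoc]
  have hwCn : w ∈ C n := by
    have := hn (n + 1) (Nat.le_succ n)
    rw [show C n = (⟨C, monotone_nat_of_le_succ hCmono⟩ : ℕ →o Submodule R R) n from rfl, this]
    exact hwC
  rw [hCmem] at hwCn
  obtain ⟨y, hy, hwy⟩ := hwCn
  have : a₂ = y := by
    have h0 : ((s ^ n : S) : R) * (a₂ - y) = 0 := by
      rw [mul_sub, hwdef, hwy, sub_self]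
    exact sub_eq_zero.mp (hRL _ _ h0)
  rw [this] at *
  exact hy

end Aux2

namespace Aux3
open Aux Aux2
variable {R : Type*} [Ring R] {S : Submonoid R} [OreSet S]

lemma eq_top_of_one_mem {A : Type*} [Ring A] (I : TwoSidedIdeal A) (h : (1:A) ∈ I) : I = ⊤ :=
  TwoSidedIdeal.ext fun x =>
    ⟨fun _ => trivial, fun _ => by simpa using I.mul_mem_left x 1 h⟩

lemma exists_ne_zero_mem {A : Type*} [Ring A] (I : TwoSidedIdeal A) (h : I ≠ ⊥) :
    ∃ q ∈ I, q ≠ 0 := by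
  by_contra hc
  push_neg at hc
  exact h (TwoSidedIdeal.ext fun x =>
    ⟨fun hx => hc x hx,
     fun hx => by rw [show x = (0:A) from hx]; exact I.zero_mem⟩)

/-- Contraction of a two-sided ideal of the localization. -/
def contr (Q : TwoSidedIdeal (R[S⁻¹])) : TwoSidedIdeal R :=
  TwoSidedIdeal.mk' {z | z /ₒ (1:S) ∈ Q}
    (by show (0:R) /ₒ (1:S) ∈ Q; rw [phi_zero]; exact Q.zero_mem)
    (fun {x y} hx hy => by show (x + y) /ₒ (1:S) ∈ Q; rw [phi_add]; exact Q.add_mem hx hy)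
    (fun {x} hx => by
      show (-x) /ₒ (1:S) ∈ Q
      rw [show (-x) /ₒ (1:S) = -(x /ₒ (1:S)) from (OreLocalization.neg_def x 1).symm]
      exact Q.neg_mem hx)
    (fun {x y} hy => by show (x * y) /ₒ (1:S) ∈ Q; rw [phi_mul]; exact Q.mul_mem_left _ _ hy)
    (fun {x y} hx => by show (x * y) /ₒ (1:S) ∈ Q; rw [phi_mul]; exact Q.mul_mem_right _ _ hx)

lemma mem_contr (Q : TwoSidedIdeal (R[S⁻¹])) (z : R) :
    z ∈ contr Q ↔ z /ₒ (1:S) ∈ Q := by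
  unfold contr
  rw [TwoSidedIdeal.mem_mk']
  rfl

lemma contr_prime (hNoeth : IsNoetherianRing R)
    (hN : ∀ s : S, IsNormalElem (s : R))
    (hRL : ∀ (s : S) (x : R), (s:R) * x = 0 → x = 0)
    (Q : TwoSidedIdeal (R[S⁻¹])) (hQ : Q.IsPrimeTS) :
    (contr Q).IsPrimeTS := by
  constructor
  · intro h
    apply hQ.1
    apply eq_top_of_one_mem
    have h1 : (1:R) ∈ contr Q := h ▸ trivial
    rw [mem_contr, phi_one] at h1
    exact h1
  · intro a b H
    have H' : ∀ r : R, (a * r * b) /ₒ (1:S) ∈ Q := fun r => (mem_contr Q _).mp (H r)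
    have key : ∀ τ : R[S⁻¹], (a /ₒ (1:S)) * τ * (b /ₒ (1:S)) ∈ Q := by
      intro τ
      induction τ using OreLocalization.ind with
      | _ w s =>
        obtain ⟨a₂, ha₂⟩ := normal_swap_r (hN s) a
        have hmul : (a /ₒ (1:S)) * (w /ₒ s) = (a₂ * w) /ₒ (s * 1) :=
          oreDiv_mul_char a w 1 s a₂ s ha₂
        rw [mul_one] at hmul
        rw [hmul, mul_div_one, mem_shift]
        exact conj_mem hNoeth hN hRL Q a b H' s a₂ ha₂ w
    rcases hQ.2 _ _ key with h | h
    · exact Or.inl ((mem_contr Q a).mpr h)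
    · exact Or.inr ((mem_contr Q b).mpr h)

lemma contr_ne_bot (Q : TwoSidedIdeal (R[S⁻¹])) (hQ : Q ≠ ⊥) : contr Q ≠ ⊥ := by
  obtain ⟨q, hqQ, hqne⟩ := exists_ne_zero_mem Q hQ
  obtain ⟨w, s, rfl⟩ : ∃ w s, q = w /ₒ s := by
    induction q using OreLocalization.ind with
    | _ w s => exact ⟨w, s, rfl⟩
  have hw : w ∈ contr Q := (mem_contr Q w).mpr ((mem_shift Q w s).mp hqQ)
  have hwne : w ≠ 0 := by
    rintro rfl
    exact hqne (zero_oreDiv' s)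
  intro h
  rw [h] at hw
  exact hwne hw

end Aux3

namespace Aux4
open Aux Aux2 Aux3
variable {R : Type*} [Ring R]

lemma mem_span_singleton_normal {x : R} (hx : IsNormalElem x) (y : R) :
    y ∈ TwoSidedIdeal.span {x} ↔ ∃ a, y = x * a := by
  constructor
  · intro hy
    let J : TwoSidedIdeal R := TwoSidedIdeal.mk' {y | ∃ a, y = x * a}
      ⟨0, (mul_zero x).symm⟩
      (fun {u v} hu hv => by
        obtain ⟨a, ha⟩ := hu; obtain ⟨b, hb⟩ := hv
        exact ⟨a + b, by rw [ha, hb, mul_add]⟩)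
      (fun {u} hu => by
        obtain ⟨a, ha⟩ := hu
        exact ⟨-a, by rw [ha, mul_neg]⟩)
      (fun {u v} hv => by
        obtain ⟨a, ha⟩ := hv
        obtain ⟨b, hb⟩ := normal_swap_l hx u
        exact ⟨b * a, by rw [ha, ← mul_assoc, hb, mul_assoc]⟩)
      (fun {u v} hu => by
        obtain ⟨a, ha⟩ := hu
        exact ⟨a * v, by rw [ha, mul_assoc]⟩)
    have hsub : ({x} : Set R) ⊆ J := by
      intro z hz
      rw [Set.mem_singleton_iff] at hz
      show z ∈ J
      rw [TwoSidedIdeal.mem_mk']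
      exact ⟨1, by rw [hz, mul_one]⟩
    have := TwoSidedIdeal.mem_span_iff.mp hy J hsub
    rwa [TwoSidedIdeal.mem_mk'] at this
  · rintro ⟨a, rfl⟩
    exact TwoSidedIdeal.mul_mem_right _ _ _
      (TwoSidedIdeal.subset_span (Set.mem_singleton x))

end Aux4

namespace Aux5
open Aux Aux2 Aux3
variable {R : Type*} [Ring R] {S : Submonoid R} [OreSet S]

/-- Extension of a prime two-sided ideal disjoint from `S` to the localization. -/
def extIdeal (hN : ∀ s : S, IsNormalElem (s : R))
    (P : TwoSidedIdeal R) (hP : P.IsPrimeTS) (hdisj : ∀ s : S, (s:R) ∉ P) :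
    TwoSidedIdeal (R[S⁻¹]) :=
  TwoSidedIdeal.mk' {x | ∃ p, p ∈ P ∧ ∃ s : S, x = p /ₒ s}
    (⟨0, P.zero_mem, 1, (zero_oreDiv' 1).symm⟩)
    (fun {x y} hx hy => by
      obtain ⟨p₁, hp₁, s₁, rfl⟩ := hx
      obtain ⟨p₂, hp₂, s₂, rfl⟩ := hy
      obtain ⟨rb, hrb⟩ := normal_swap_r (hN s₂) (s₁ : R)
      refine ⟨(s₂ : R) * p₁ + rb * p₂,
        P.add_mem (P.mul_mem_left _ _ hp₁) (P.mul_mem_left _ _ hp₂), s₂ * s₁, ?_⟩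
      rw [oreDiv_add_char s₁ s₂ rb s₂ hrb]
      simp [Submonoid.smul_def]
    )
    (fun {x} hx => by
      obtain ⟨p, hp, s, rfl⟩ := hx
      exact ⟨-p, P.neg_mem hp, s, OreLocalization.neg_def p s⟩)
    (fun {x y} hy => by
      obtain ⟨p, hp, s, rfl⟩ := hy
      induction x using OreLocalization.ind with
      | _ w u =>
        obtain ⟨r', s', h⟩ := oreCondition w s
        exact ⟨r' * p, P.mul_mem_left _ _ hp, s' * u,
          oreDiv_mul_char w p u s r' s' h⟩)
    (fun {x y} hx => by
      obtain ⟨p, hp, s, rfl⟩ := hx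
      induction y using OreLocalization.ind with
      | _ w u =>
        obtain ⟨p', s', h⟩ := oreCondition p u
        have hp' : p' ∈ P := by
          have hmem : (s' : R) * p ∈ P := P.mul_mem_left _ _ hp
          rw [h] at hmem
          rcases hP.2 p' (u : R) (fun r => by
            obtain ⟨r₂, hr₂⟩ := normal_swap_l (hN u) r
            rw [mul_assoc, hr₂, ← mul_assoc]
            exact P.mul_mem_right _ _ hmem) with h' | h'
          · exact h'
          · exact absurd h' (hdisj u)
        exact ⟨p' * w, P.mul_mem_right _ _ hp', s' * s,
          oreDiv_mul_char p w s u p' s' h⟩)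

lemma mem_extIdeal (hN : ∀ s : S, IsNormalElem (s : R))
    (P : TwoSidedIdeal R) (hP : P.IsPrimeTS) (hdisj : ∀ s : S, (s:R) ∉ P) (x : R[S⁻¹]) :
    x ∈ extIdeal hN P hP hdisj ↔ ∃ p, p ∈ P ∧ ∃ s : S, x = p /ₒ s := by
  unfold extIdeal
  rw [TwoSidedIdeal.mem_mk']
  rfl

variable (hN : ∀ s : S, IsNormalElem (s : R))
variable {P : TwoSidedIdeal R} {hP : P.IsPrimeTS} {hdisj : ∀ s : S, (s:R) ∉ P}

lemma extIdeal_contr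
    (hRL : ∀ (s : S) (x : R), (s:R) * x = 0 → x = 0)
    (hP : P.IsPrimeTS) (hdisj : ∀ s : S, (s:R) ∉ P)
    {z : R} {u : S} (h : z /ₒ u ∈ extIdeal hN P hP hdisj) : z ∈ P := by
  have h1 := (mem_shift _ z u).mp h
  rw [mem_extIdeal] at h1
  obtain ⟨p, hp, s, hps⟩ := h1
  have h2 : ((s : R) * z) /ₒ (1 : S) = p /ₒ (1 : S) := by
    rw [phi_mul, hps, clear_denom]
  have h3 : (s : R) * z ∈ P := by rw [phi_inj hRL h2]; exact hp
  rcases hP.2 (s : R) z (fun r => by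
    obtain ⟨r₂, hr₂⟩ := normal_swap_r (hN s) r
    rw [show (s:R) * r * z = r₂ * ((s:R) * z) from by rw [← mul_assoc, ← hr₂, mul_assoc]]
    exact P.mul_mem_left _ _ h3) with h' | h'
  · exact absurd h' (hdisj s)
  · exact h'

lemma extIdeal_mem (hP : P.IsPrimeTS) (hdisj : ∀ s : S, (s:R) ∉ P)
    {z : R} (hz : z ∈ P) (u : S) : z /ₒ u ∈ extIdeal hN P hP hdisj :=
  (mem_extIdeal hN P hP hdisj _).mpr ⟨z, hz, u, rfl⟩

lemma extIdeal_prime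
    (hRL : ∀ (s : S) (x : R), (s:R) * x = 0 → x = 0)
    (hP : P.IsPrimeTS) (hdisj : ∀ s : S, (s:R) ∉ P) :
    (extIdeal hN P hP hdisj).IsPrimeTS := by
  constructor
  · intro h
    apply hP.1
    apply eq_top_of_one_mem
    have h1 : (1:R) /ₒ (1:S) ∈ extIdeal hN P hP hdisj := by
      rw [phi_one, h]; trivial
    exact extIdeal_contr hN hRL hP hdisj h1
  · intro a b Hab
    obtain ⟨a₀, s₁, rfl⟩ : ∃ w s, a = w /ₒ s := by
      induction a using OreLocalization.ind with
      | _ w s => exact ⟨w, s, rfl⟩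
    obtain ⟨b₀, s₂, rfl⟩ : ∃ w s, b = w /ₒ s := by
      induction b using OreLocalization.ind with
      | _ w s => exact ⟨w, s, rfl⟩
    have key : ∀ r : R, a₀ * r * b₀ ∈ P := by
      intro r
      have h1 := Hab ((r * (s₂ : R)) /ₒ (1 : S))
      have h2 : (a₀ /ₒ s₁) * ((r * (s₂ : R)) /ₒ (1 : S)) * (b₀ /ₒ s₂)
          = ((a₀ * r) * b₀) /ₒ s₁ := by
        rw [mul_div_one, show a₀ * (r * (s₂:R)) = (a₀ * r) * (s₂:R) from (mul_assoc _ _ _).symm,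
          OreLocalization.mul_cancel']
      rw [h2] at h1
      exact extIdeal_contr hN hRL hP hdisj h1
    rcases hP.2 a₀ b₀ key with h | h
    · exact Or.inl (extIdeal_mem hN hP hdisj h s₁)
    · exact Or.inr (extIdeal_mem hN hP hdisj h s₂)

lemma extIdeal_ne_bot
    (hRL : ∀ (s : S) (x : R), (s:R) * x = 0 → x = 0)
    (hP : P.IsPrimeTS) (hdisj : ∀ s : S, (s:R) ∉ P) (hPb : P ≠ ⊥) :
    extIdeal hN P hP hdisj ≠ ⊥ := by
  obtain ⟨p, hp, hpne⟩ := exists_ne_zero_mem P hPb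
  intro h
  have h1 : p /ₒ (1:S) ∈ extIdeal hN P hP hdisj := extIdeal_mem hN hP hdisj hp 1
  rw [h] at h1
  have h2 : p /ₒ (1:S) = (0:R) /ₒ (1:S) := by
    rw [phi_zero]; exact h1
  exact hpne (phi_inj hRL h2)

lemma right_fraction_clear (hN : ∀ s : S, IsNormalElem (s : R)) (τ : R[S⁻¹]) :
    ∃ (s : S) (w : R), τ * ((s:R) /ₒ (1:S)) = w /ₒ (1:S) := by
  obtain ⟨w₀, s₀, rfl⟩ : ∃ w s, τ = w /ₒ s := by
    induction τ using OreLocalization.ind with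
    | _ w s => exact ⟨w, s, rfl⟩
  obtain ⟨w', hw'⟩ := normal_swap_l (hN s₀) w₀
  refine ⟨s₀, w', ?_⟩
  rw [mul_div_one, hw']
  rw [OreLocalization.expand' w' 1 s₀]
  simp [Submonoid.smul_def]

end Aux5

open Aux Aux2 Aux3 Aux4 Aux5 in
open OreLocalization in
/-- Pulling back unique factorisation along a localisation at finitely many normal
elements generating pairwise distinct completely prime ideals: if the localisation `T`
is a noetherian UFR (resp. UFD), then so is `R`. -/
theorem pull_back_UFR {R : Type*} [Ring R]
    (hNoeth : IsNoetherianRing R) (hPrime : IsPrimeRing R)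
    (t : ℕ) (d : Fin t → R) (hd0 : ∀ i, d i ≠ 0) (hdn : ∀ i, IsNormalElem (d i))
    (hdcp : ∀ i, (TwoSidedIdeal.span {d i}).IsCompletelyPrime)
    (hdist : ∀ i j, i ≠ j →
      (TwoSidedIdeal.span {d i} : TwoSidedIdeal R) ≠ TwoSidedIdeal.span {d j})
    [OreSet (Submonoid.closure (Set.range d))] :
    (IsNoethUFR (R[(Submonoid.closure (Set.range d))⁻¹]) → IsNoethUFR R) ∧
    (IsNoethUFD (R[(Submonoid.closure (Set.range d))⁻¹]) → IsNoethUFD R) := by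
  classical
  by_cases hnt : (1 : R) = 0
  · constructor
    · intro _
      refine ⟨hPrime, hNoeth, fun P hp _ => absurd hp.1 ?_⟩
      intro hne
      exact hne (eq_top_of_one_mem P (by rw [hnt]; exact P.zero_mem))
    · intro hT
      haveI := hT.2.1.toNontrivial
      have h0 : (1 : R[(Submonoid.closure (Set.range d))⁻¹]) = 0 := by
        rw [OreLocalization.one_def, hnt, zero_oreDiv']
      exact absurd h0 one_ne_zero
  -- R is nontrivial from now on
  have hdS : ∀ i, d i ∈ (Submonoid.closure (Set.range d)) :=
    fun i => Submonoid.subset_closure (Set.mem_range_self i)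
  -- every element of (Submonoid.closure (Set.range d)) is normal and nonzero
  have hNZ : ∀ s ∈ (Submonoid.closure (Set.range d)), IsNormalElem s ∧ s ≠ 0 := by
    intro s hs
    induction hs using Submonoid.closure_induction with
    | mem x h =>
      obtain ⟨i, rfl⟩ := h
      exact ⟨hdn i, hd0 i⟩
    | one => exact ⟨normal_one, hnt⟩
    | mul x y hx hy ihx ihy =>
      refine ⟨normal_mul ihx.1 ihy.1, ?_⟩
      intro h0
      have hz : ∀ r, x * r * y = 0 := by
        intro r
        obtain ⟨r₂, hr₂⟩ := normal_swap_l ihy.1 r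
        rw [mul_assoc, hr₂, ← mul_assoc, h0, zero_mul]
      rcases hPrime x y hz with h | h
      exacts [ihx.2 h, ihy.2 h]
  have hN : ∀ s : ((Submonoid.closure (Set.range d))), IsNormalElem (s : R) :=
    fun s => (hNZ s s.2).1
  have hRL : ∀ (s : ((Submonoid.closure (Set.range d)))) (x : R), (s : R) * x = 0 → x = 0 := by
    intro s x hsx
    have hn := (hNZ s s.2).1
    have hz : ∀ r, (s : R) * r * x = 0 := by
      intro r
      obtain ⟨r₂, hr₂⟩ := normal_swap_r hn r
      rw [hr₂, mul_assoc, hsx, mul_zero]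
    rcases hPrime _ _ hz with h | h
    · exact absurd h (hNZ s s.2).2
    · exact h
  have hRR : ∀ (s : ((Submonoid.closure (Set.range d)))) (x : R), x * (s : R) = 0 → x = 0 := by
    intro s x hxs
    have hn := (hNZ s s.2).1
    have hz : ∀ r, x * r * (s : R) = 0 := by
      intro r
      obtain ⟨r₂, hr₂⟩ := normal_swap_l hn r
      rw [mul_assoc, hr₂, ← mul_assoc, hxs, zero_mul]
    rcases hPrime _ _ hz with h | h
    · exact h
    · exact absurd h (hNZ s s.2).2
  have hspan : ∀ i (y : R), y ∈ TwoSidedIdeal.span {d i} ↔ ∃ a, y = d i * a :=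
    fun i => mem_span_singleton_normal (hdn i)
  have hspan_prime : ∀ i, (TwoSidedIdeal.span {d i}).IsPrimeTS := by
    intro i
    refine ⟨(hdcp i).1, fun a b h => (hdcp i).2 a b ?_⟩
    have := h 1
    rwa [mul_one] at this
  have hspan_ne_bot : ∀ i, (TwoSidedIdeal.span {d i}) ≠ ⊥ := by
    intro i h
    have hm : d i ∈ TwoSidedIdeal.span {d i} :=
      TwoSidedIdeal.subset_span (Set.mem_singleton (d i))
    rw [h] at hm
    exact hd0 i hm
  have hstep : ∀ i (r : R), 1 = r * d i → False := by
    intro i r h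
    obtain ⟨b, hb⟩ := normal_swap_l (hdn i) r
    have h1 : (1:R) ∈ TwoSidedIdeal.span {d i} := (hspan i 1).mpr ⟨b, by rw [h, hb]⟩
    exact (hdcp i).1 (eq_top_of_one_mem _ h1)
  -- case 1 producer: primes containing some `d i`
  have hcase1 : ∀ (P : TwoSidedIdeal R) (i : Fin t), d i ∈ P →
      ∃ Q : TwoSidedIdeal R, Q ≠ ⊥ ∧ Q.IsPrimeTS ∧ Q.IsPrincipalNormal ∧ Q ≤ P := by
    intro P i hi
    refine ⟨TwoSidedIdeal.span {d i}, hspan_ne_bot i, hspan_prime i,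
      ⟨d i, hdn i, hspan i⟩, ?_⟩
    intro y hy
    obtain ⟨a, rfl⟩ := (hspan i y).mp hy
    exact P.mul_mem_right _ _ hi
  -- disjointness of primes avoiding the `d i` from (Submonoid.closure (Set.range d))
  have hdisjP : ∀ (P : TwoSidedIdeal R), P.IsPrimeTS → (∀ i, d i ∉ P) →
      ∀ s : ((Submonoid.closure (Set.range d))), (s : R) ∉ P := by
    intro P hp hd s
    obtain ⟨sv, hsv⟩ := s
    show sv ∉ P
    induction hsv using Submonoid.closure_induction with
    | mem x h =>
      obtain ⟨i, rfl⟩ := h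
      exact hd i
    | one => exact fun h1 => hp.1 (eq_top_of_one_mem P h1)
    | mul x y hx hy ihx ihy =>
      intro hxy
      have hz : ∀ r, x * r * y ∈ P := by
        intro r
        obtain ⟨r₂, hr₂⟩ := normal_swap_l (hNZ y hy).1 r
        rw [mul_assoc, hr₂, ← mul_assoc]
        exact P.mul_mem_right _ _ hxy
      rcases hp.2 x y hz with h | h
      exacts [ihx h, ihy h]
  -- The main construction, giving the UFR condition for primes avoiding all `d i`.
  have hmain : IsNoethUFR (R[((Submonoid.closure (Set.range d)))⁻¹]) →
      ∀ (P : TwoSidedIdeal R), P.IsPrimeTS → P ≠ ⊥ → (∀ i, d i ∉ P) →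
      ∃ Q : TwoSidedIdeal R, Q ≠ ⊥ ∧ Q.IsPrimeTS ∧ Q.IsPrincipalNormal ∧ Q ≤ P := by
    intro hT P hPp hPb hd
    have hdisj := hdisjP P hPp hd
    obtain ⟨Q, hQb, hQp, ⟨x, hxn, hxmem⟩, hQle⟩ :=
      hT.2.2 (extIdeal hN P hPp hdisj) (extIdeal_prime hN hRL hPp hdisj)
        (extIdeal_ne_bot hN hRL hPp hdisj hPb)
    -- the property of being a two-sided generator of Q over R
    set Gen : R → Prop := fun c =>
      (∀ y, y ∈ Q ↔ ∃ u, y = (c /ₒ (1:(Submonoid.closure (Set.range d)))) * u) ∧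
      (∀ y, y ∈ Q ↔ ∃ u, y = u * (c /ₒ (1:(Submonoid.closure (Set.range d))))) with hGendef
    have hxQ : x ∈ Q := (hxmem x).mpr ⟨1, (mul_one x).symm⟩
    have hGen0 : ∃ c₀, Gen c₀ := by
      obtain ⟨c₀, s₀, hx₀⟩ : ∃ c s, x = c /ₒ s := by
        induction x using OreLocalization.ind with
        | _ w s => exact ⟨w, s, rfl⟩
      have hxc : ((s₀ : R) /ₒ (1:(Submonoid.closure (Set.range d)))) * x = c₀ /ₒ (1:(Submonoid.closure (Set.range d))) := by
        rw [hx₀]; exact clear_denom c₀ s₀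
      have hcx : ((1:R) /ₒ s₀) * (c₀ /ₒ (1:(Submonoid.closure (Set.range d)))) = x := by
        rw [inv_mul_phi, hx₀]
      have hc₀Q : c₀ /ₒ (1:(Submonoid.closure (Set.range d))) ∈ Q := hxc ▸ Q.mul_mem_left _ _ hxQ
      refine ⟨c₀, fun y => ⟨?_, ?_⟩, fun y => ⟨?_, ?_⟩⟩
      · intro hy
        have hy' : ((1:R) /ₒ s₀) * y ∈ Q := Q.mul_mem_left _ _ hy
        obtain ⟨u, hu⟩ := (hxmem _).mp hy'
        refine ⟨u, ?_⟩
        have : ((s₀ : R) /ₒ (1:(Submonoid.closure (Set.range d)))) * (((1:R) /ₒ s₀) * y) = y := by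
          rw [← mul_assoc, phi_inv_cancel, one_mul]
        rw [← this, hu, ← mul_assoc, hxc]
      · rintro ⟨u, rfl⟩
        exact Q.mul_mem_right _ _ hc₀Q
      · intro hy
        obtain ⟨a, ha⟩ := (hxmem y).mp hy
        have hmem2 : y ∈ {z | ∃ a, z = x * a} := ⟨a, ha⟩
        rw [hxn] at hmem2
        obtain ⟨a', ha'⟩ := hmem2
        exact ⟨a' * ((1:R) /ₒ s₀), by rw [mul_assoc, hcx, ha']⟩
      · rintro ⟨u, rfl⟩
        exact Q.mul_mem_left _ _ hc₀Q
    have hGenNe : ∀ c, Gen c → c ≠ 0 := by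
      intro c hGc hc0
      apply hQb
      apply TwoSidedIdeal.ext
      intro y
      constructor
      · intro hy
        obtain ⟨u, hu⟩ := (hGc.1 y).mp hy
        show y = 0
        rw [hu, hc0, phi_zero, zero_mul]
      · intro hy
        rw [show y = (0:R[(Submonoid.closure (Set.range d))⁻¹]) from hy]
        exact Q.zero_mem
    have hGenStrip : ∀ (c e : R) (i : Fin t), Gen c → c = d i * e → Gen e := by
      intro c e i hGc hce
      set dS : (Submonoid.closure (Set.range d)) := ⟨d i, hdS i⟩ with hdSdef
      have hφ : c /ₒ (1:(Submonoid.closure (Set.range d))) = ((dS : R) /ₒ (1:(Submonoid.closure (Set.range d)))) * (e /ₒ (1:(Submonoid.closure (Set.range d)))) := by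
        rw [← phi_mul]
        show c /ₒ (1:(Submonoid.closure (Set.range d))) = ((d i) * e) /ₒ (1:(Submonoid.closure (Set.range d)))
        rw [hce]
      have hinvde : ((1:R) /ₒ dS) * (c /ₒ (1:(Submonoid.closure (Set.range d)))) = e /ₒ (1:(Submonoid.closure (Set.range d))) := by
        rw [inv_mul_phi]
        rw [OreLocalization.expand' e 1 dS, mul_one]
        show c /ₒ dS = ((dS : R) * e) /ₒ dS
        rw [show (dS : R) * e = c from by rw [hdSdef]; exact hce.symm]
      constructor
      · intro y
        constructor
        · intro hy
          have h1 : ((dS : R) /ₒ (1:(Submonoid.closure (Set.range d)))) * y ∈ Q := Q.mul_mem_left _ _ hy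
          obtain ⟨u, hu⟩ := (hGc.1 _).mp h1
          refine ⟨u, ?_⟩
          have h2 : ((1:R) /ₒ dS) * (((dS : R) /ₒ (1:(Submonoid.closure (Set.range d)))) * y) = y := by
            rw [← mul_assoc, inv_phi_cancel, one_mul]
          apply unit_left_cancel dS
          rw [hu, hφ, mul_assoc]
        · rintro ⟨u, rfl⟩
          have h1 : (e /ₒ (1:(Submonoid.closure (Set.range d)))) * u = ((1:R) /ₒ dS) * (((c /ₒ (1:(Submonoid.closure (Set.range d))))) * u) := by
            rw [← mul_assoc, hinvde]
          rw [h1]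
          exact Q.mul_mem_left _ _ ((hGc.1 _).mpr ⟨u, rfl⟩)
      · intro y
        constructor
        · intro hy
          obtain ⟨u, hu⟩ := (hGc.2 y).mp hy
          exact ⟨u * ((dS : R) /ₒ (1:(Submonoid.closure (Set.range d)))), by rw [hu, hφ, ← mul_assoc]⟩
        · rintro ⟨u, rfl⟩
          have h1 : u * (e /ₒ (1:(Submonoid.closure (Set.range d)))) = (u * ((1:R) /ₒ dS)) * (c /ₒ (1:(Submonoid.closure (Set.range d)))) := by
            rw [mul_assoc, hinvde]
          rw [h1]
          exact (hGc.2 _).mpr ⟨u * ((1:R) /ₒ dS), rfl⟩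
    -- noetherian choice of a generator not divisible by any `d i`
    obtain ⟨c₀, hGc₀⟩ := hGen0
    obtain ⟨J, hJset, hJmax⟩ := (set_has_maximal_iff_noetherian.mpr hNoeth)
      {J : Submodule R R | ∃ c, Gen c ∧ J = Submodule.span R {c}}
      ⟨Submodule.span R {c₀}, c₀, hGc₀, rfl⟩
    obtain ⟨c, hGc, rfl⟩ := hJset
    have hcnd : ∀ (i : Fin t) (e : R), c ≠ d i * e := by
      intro i e hce
      have hGe := hGenStrip c e i hGc hce
      have hle : Submodule.span R {c} ≤ Submodule.span R {e} := by
        rw [Submodule.span_le]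
        intro z hz
        rw [Set.mem_singleton_iff] at hz
        subst hz
        exact Submodule.mem_span_singleton.mpr ⟨d i, by rw [smul_eq_mul, ← hce]⟩
      have heq : Submodule.span R {c} = Submodule.span R {e} := by
        by_contra hne
        exact hJmax (Submodule.span R {e}) ⟨e, hGe, rfl⟩ (lt_of_le_of_ne hle hne)
      have hcmem : e ∈ Submodule.span R {c} := by
        rw [heq]
        exact Submodule.mem_span_singleton_self e
      obtain ⟨r, hr⟩ := Submodule.mem_span_singleton.mp hcmem
      rw [smul_eq_mul] at hr
      have h0 : (1 - r * d i) * e = 0 := by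
        rw [sub_mul, one_mul, mul_assoc, ← hce, hr, sub_self]
      have hkey : ∀ τ : R[(Submonoid.closure (Set.range d))⁻¹],
          ((1 - r * d i) /ₒ (1:(Submonoid.closure (Set.range d)))) * τ * (e /ₒ (1:(Submonoid.closure (Set.range d)))) = 0 := by
        intro τ
        have h1 : τ * (e /ₒ (1:(Submonoid.closure (Set.range d)))) ∈ Q := (hGe.2 _).mpr ⟨τ, rfl⟩
        obtain ⟨u, hu⟩ := (hGe.1 _).mp h1
        rw [mul_assoc, hu, ← mul_assoc, ← phi_mul, h0, phi_zero, zero_mul]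
      rcases hT.1 _ _ hkey with h | h
      · have h1 : (1 - r * d i) /ₒ (1:(Submonoid.closure (Set.range d))) = (0:R) /ₒ (1:(Submonoid.closure (Set.range d))) := by rw [phi_zero]; exact h
        have := phi_inj hRL h1
        exact hstep i r (sub_eq_zero.mp this)
      · have h1 : e /ₒ (1:(Submonoid.closure (Set.range d))) = (0:R) /ₒ (1:(Submonoid.closure (Set.range d))) := by rw [phi_zero]; exact h
        have he0 : e = 0 := phi_inj hRL h1
        exact hGenNe e hGe (by rw [he0])
    -- stripping lemmas
    have hstripR : ∀ s ∈ (Submonoid.closure (Set.range d)), ∀ z w : R, z * s = c * w → ∃ v, z = c * v := by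
      intro s hs
      induction hs using Submonoid.closure_induction with
      | mem x h =>
        obtain ⟨i, rfl⟩ := h
        intro z w hzw
        obtain ⟨z₂, hz₂⟩ := normal_swap_l (hdn i) z
        have h1 : c * w ∈ TwoSidedIdeal.span {d i} := by
          rw [← hzw]
          exact (hspan i _).mpr ⟨z₂, hz₂⟩
        rcases (hdcp i).2 c w h1 with h' | h'
        · obtain ⟨a, ha⟩ := (hspan i c).mp h'
          exact absurd ha (hcnd i a)
        · obtain ⟨a, ha⟩ := (hspan i w).mp h'
          obtain ⟨a₂, ha₂⟩ := normal_swap_r (hdn i) a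
          refine ⟨a₂, ?_⟩
          have h2 : (z - c * a₂) * d i = 0 := by
            rw [sub_mul, hzw, ha, ha₂, mul_assoc, sub_self]
          exact sub_eq_zero.mp (hRR ⟨d i, hdS i⟩ _ h2)
      | one =>
        intro z w hzw
        exact ⟨w, by rwa [mul_one] at hzw⟩
      | mul x y hx hy ihx ihy =>
        intro z w hzw
        rw [← mul_assoc] at hzw
        obtain ⟨v, hv⟩ := ihy (z * x) w hzw
        exact ihx z v hv
    have hstripL : ∀ s ∈ (Submonoid.closure (Set.range d)), ∀ z w : R, s * z = w * c → ∃ v, z = v * c := by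
      intro s hs
      induction hs using Submonoid.closure_induction with
      | mem x h =>
        obtain ⟨i, rfl⟩ := h
        intro z w hzw
        have h1 : w * c ∈ TwoSidedIdeal.span {d i} := by
          rw [← hzw]
          exact (hspan i _).mpr ⟨z, rfl⟩
        rcases (hdcp i).2 w c h1 with h' | h'
        · obtain ⟨a, ha⟩ := (hspan i w).mp h'
          refine ⟨a, ?_⟩
          have h2 : d i * (z - a * c) = 0 := by
            rw [mul_sub, hzw, ha, mul_assoc, sub_self]
          exact sub_eq_zero.mp (hRL ⟨d i, hdS i⟩ _ h2)
        · obtain ⟨a, ha⟩ := (hspan i c).mp h'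
          exact absurd ha (hcnd i a)
      | one =>
        intro z w hzw
        exact ⟨w, by rwa [one_mul] at hzw⟩
      | mul x y hx hy ihx ihy =>
        intro z w hzw
        rw [mul_assoc] at hzw
        obtain ⟨v, hv⟩ := ihx (y * z) w hzw
        exact ihy z v hv
    -- contraction of Q equals both cR and Rc
    have cRK : ∀ z : R, z /ₒ (1:(Submonoid.closure (Set.range d))) ∈ Q ↔ ∃ v, z = c * v := by
      intro z
      constructor
      · intro hz
        obtain ⟨τ, hτ⟩ := (hGc.1 _).mp hz
        obtain ⟨s, w, hsw⟩ := right_fraction_clear hN τ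
        have h1 : (z * (s : R)) /ₒ (1:(Submonoid.closure (Set.range d))) = (c * w) /ₒ (1:(Submonoid.closure (Set.range d))) := by
          rw [phi_mul, phi_mul, hτ, mul_assoc, hsw]
        exact hstripR (s : R) s.2 z w (phi_inj hRL h1)
      · rintro ⟨v, rfl⟩
        rw [phi_mul]
        exact (hGc.1 _).mpr ⟨v /ₒ (1:(Submonoid.closure (Set.range d))), rfl⟩
    have RcK : ∀ z : R, z /ₒ (1:(Submonoid.closure (Set.range d))) ∈ Q ↔ ∃ v, z = v * c := by
      intro z
      constructor
      · intro hz
        obtain ⟨τ, hτ⟩ := (hGc.2 _).mp hz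
        obtain ⟨w, s, rfl⟩ : ∃ w s, τ = w /ₒ s := by
          induction τ using OreLocalization.ind with
          | _ w s => exact ⟨w, s, rfl⟩
        have h1 : ((s : R) * z) /ₒ (1:(Submonoid.closure (Set.range d))) = (w * c) /ₒ (1:(Submonoid.closure (Set.range d))) := by
          rw [phi_mul, hτ, ← mul_assoc, clear_denom, ← phi_mul]
        exact hstripL (s : R) s.2 z w (phi_inj hRL h1)
      · rintro ⟨v, rfl⟩
        rw [phi_mul]
        exact (hGc.2 _).mpr ⟨v /ₒ (1:(Submonoid.closure (Set.range d))), rfl⟩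
    have hcn : IsNormalElem c := by
      apply Set.eq_of_subset_of_subset
      · rintro z ⟨a, rfl⟩
        exact (RcK _).mp ((cRK _).mpr ⟨a, rfl⟩)
      · rintro z ⟨a, rfl⟩
        exact (cRK _).mp ((RcK _).mpr ⟨a, rfl⟩)
    have hspanc : ∀ y, y ∈ TwoSidedIdeal.span {c} ↔ ∃ a, y = c * a :=
      mem_span_singleton_normal hcn
    refine ⟨TwoSidedIdeal.span {c}, ?_, ⟨?_, ?_⟩, ⟨c, hcn, hspanc⟩, ?_⟩
    · intro h
      have hm : c ∈ TwoSidedIdeal.span {c} :=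
        TwoSidedIdeal.subset_span (Set.mem_singleton c)
      rw [h] at hm
      exact hGenNe c hGc hm
    · intro h
      have h1 : (1:R) ∈ TwoSidedIdeal.span {c} := h ▸ trivial
      obtain ⟨a, ha⟩ := (hspanc 1).mp h1
      have h2 : (1:R) /ₒ (1:(Submonoid.closure (Set.range d))) ∈ Q := (cRK 1).mpr ⟨a, ha⟩
      rw [phi_one] at h2
      exact hQp.1 (eq_top_of_one_mem Q h2)
    · intro a b H
      have H' : ∀ r : R, (a * r * b) /ₒ (1:(Submonoid.closure (Set.range d))) ∈ Q := by
        intro r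
        obtain ⟨v, hv⟩ := (hspanc _).mp (H r)
        exact (cRK _).mpr ⟨v, hv⟩
      have key : ∀ τ : R[(Submonoid.closure (Set.range d))⁻¹], (a /ₒ (1:(Submonoid.closure (Set.range d)))) * τ * (b /ₒ (1:(Submonoid.closure (Set.range d)))) ∈ Q := by
        intro τ
        obtain ⟨w, s, rfl⟩ : ∃ w s, τ = w /ₒ s := by
          induction τ using OreLocalization.ind with
          | _ w s => exact ⟨w, s, rfl⟩
        obtain ⟨a₂, ha₂⟩ := normal_swap_r (hN s) a
        have hmul : (a /ₒ (1:(Submonoid.closure (Set.range d)))) * (w /ₒ s) = (a₂ * w) /ₒ (s * 1) :=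
          oreDiv_mul_char a w 1 s a₂ s ha₂
        rw [mul_one] at hmul
        rw [hmul, mul_div_one, mem_shift]
        exact conj_mem hNoeth hN hRL Q a b H' s a₂ ha₂ w
      rcases hQp.2 _ _ key with h | h
      · exact Or.inl ((hspanc a).mpr ((cRK a).mp h))
      · exact Or.inr ((hspanc b).mpr ((cRK b).mp h))
    · intro y hy
      obtain ⟨v, rfl⟩ := (hspanc y).mp hy
      have hcP : c ∈ P := by
        have h1 : c /ₒ (1:(Submonoid.closure (Set.range d))) ∈ Q := (cRK c).mpr ⟨1, (mul_one c).symm⟩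
        exact extIdeal_contr hN hRL hPp hdisj (hQle h1)
      exact P.mul_mem_right _ _ hcP
  -- assemble the two statements
  have hUFR : IsNoethUFR (R[((Submonoid.closure (Set.range d)))⁻¹]) → IsNoethUFR R := by
    intro hT
    refine ⟨hPrime, hNoeth, fun P hPp hPb => ?_⟩
    by_cases hdi : ∃ i, d i ∈ P
    · obtain ⟨i, hi⟩ := hdi
      exact hcase1 P i hi
    · push_neg at hdi
      exact hmain hT P hPp hPb hdi
  refine ⟨hUFR, ?_⟩
  intro hT
  haveI := hT.2.1
  refine ⟨hUFR hT.1, ?_, ?_⟩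
  · -- R is a domain
    haveI : Nontrivial R := ⟨1, 0, hnt⟩
    haveI : NoZeroDivisors R := by
      constructor
      intro a b hab
      have h1 : (a /ₒ (1:(Submonoid.closure (Set.range d)))) *
          (b /ₒ (1:(Submonoid.closure (Set.range d)))) = 0 := by
        rw [← phi_mul, hab, phi_zero]
      rcases mul_eq_zero.mp h1 with h | h
      · exact Or.inl (phi_inj hRL (by rw [h, phi_zero]))
      · exact Or.inr (phi_inj hRL (by rw [h, phi_zero]))
    exact NoZeroDivisors.to_isDomain R
  · -- height one primes are completely prime
    intro P hP1
    obtain ⟨hPp, hPb, hPmin⟩ := hP1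
    by_cases hdi : ∃ i, d i ∈ P
    · obtain ⟨i, hi⟩ := hdi
      have hle : TwoSidedIdeal.span {d i} ≤ P := by
        intro y hy
        obtain ⟨a, rfl⟩ := (hspan i y).mp hy
        exact P.mul_mem_right _ _ hi
      have hnotlt : ¬ TwoSidedIdeal.span {d i} < P := by
        intro hlt
        exact hspan_ne_bot i (hPmin _ (hspan_prime i) hlt)
      have heq : TwoSidedIdeal.span {d i} = P := eq_of_le_of_not_lt hle hnotlt
      rw [← heq]
      exact hdcp i
    · push_neg at hdi
      have hdisj := hdisjP P hPp hdi
      have hPe1 : (extIdeal hN P hPp hdisj).IsHeightOnePrime := by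
        refine ⟨extIdeal_prime hN hRL hPp hdisj, extIdeal_ne_bot hN hRL hPp hdisj hPb, ?_⟩
        intro Q' hQ'p hQ'lt
        by_contra hQ'b
        have hP'p := contr_prime hNoeth hN hRL Q' hQ'p
        have hP'b := contr_ne_bot Q' hQ'b
        have hP'le : contr Q' ≤ P := by
          intro z hz
          rw [mem_contr] at hz
          exact extIdeal_contr hN hRL hPp hdisj (le_of_lt hQ'lt hz)
        have hP'ne : contr Q' ≠ P := by
          intro heq
          apply hQ'lt.not_ge
          intro y hy
          obtain ⟨p, hp, s, rfl⟩ := (mem_extIdeal hN P hPp hdisj y).mp hy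
          have hpP' : p ∈ contr Q' := heq ▸ hp
          rw [mem_contr] at hpP'
          exact (mem_shift Q' p s).mpr hpP'
        exact hP'b (hPmin _ hP'p (lt_of_le_of_ne hP'le hP'ne))
      have hcp := hT.2.2 _ hPe1
      refine ⟨hPp.1, fun a b hab => ?_⟩
      have h1 : (a * b) /ₒ (1:(Submonoid.closure (Set.range d))) ∈ extIdeal hN P hPp hdisj :=
        extIdeal_mem hN hPp hdisj hab 1
      rw [phi_mul] at h1
      rcases hcp.2 _ _ h1 with h | h
      · exact Or.inl (extIdeal_contr hN hRL hPp hdisj h)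
      · exact Or.inr (extIdeal_contr hN hRL hPp hdisj h)
end

section
/- Let A be a noetherian domain over a field k with k-automorphism σ, and let a group H act by automorphisms on the skew Laurent extension A[X^{±1}; σ] such that X is an H-eigenvector, A is H-stable, the action of σ on A coincides with the action of an element h_0 ∈ H, and h_0·X = λ_0 X where λ_0 ∈ k* is not a root of unity. If I is an H-invariant ideal of A[X^{±1}; σ] and x = a_1 X^{k_1} + ... + a_n X^{k_n} ∈ I with a_i ∈ A and the exponents k_i pairwise distinct, then each a_i ∈ I ∩ A. Consequently I = ⊕_{i∈ℤ} (I ∩ A) X^i. -/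
/-- In a skew Laurent extension `A[X^{±1}; σ]` with a group `H` acting as in
Hypothesis 2.1, every `H`-invariant ideal is graded: the coefficients of any of its
elements lie in it, and `I = ⊕ (I ∩ A) Xⁱ`. -/
theorem hIdeal_graded_skew_laurent
    {k : Type*} [Field k] {A R H : Type*} [Ring A] [Algebra k A] [Ring R] [Algebra k R]
    [Group H]
    (hdom : IsDomain A) (hnoeth : IsNoetherianRing A)
    (σ : A ≃ₐ[k] A) (ι : A →ₐ[k] R) (hι : Function.Injective ι) (X : Rˣ)
    -- skew Laurent relation and freeness over `A` with basis the powers of `X`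
    (hrel : ∀ a : A, (X : R) * ι a = ι (σ a) * (X : R))
    (hbasis : ∀ r : R, ∃! f : ℤ →₀ A, r = f.sum fun i b => ι b * ((X ^ i : Rˣ) : R))
    -- the action of `H` on `R`, stabilising `A`, with `X` an `H`-eigenvector
    (ρ : H →* (R ≃ₐ[k] R)) (ρA : H →* (A ≃ₐ[k] A))
    (hstable : ∀ (h : H) (a : A), ρ h (ι a) = ι (ρA h a))
    (Λ : H → kˣ) (heig : ∀ h : H, ρ h (X : R) = (Λ h : k) • (X : R))
    -- `σ` is the action of some `h₀ ∈ H`, whose eigenvalue `λ₀` on `X` is not a root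
    -- of unity
    (h₀ : H) (hh₀ : ∀ a : A, ρA h₀ a = σ a)
    (hlam0 : ∀ n : ℕ, 0 < n → ((Λ h₀ : k)) ^ n ≠ 1)
    -- `I` is an `H`-invariant ideal of `R`
    (I : TwoSidedIdeal R) (hI : ∀ h : H, ⇑(ρ h) '' (I : Set R) = (I : Set R)) :
    (∀ (n : ℕ) (a : Fin n → A) (kk : Fin n → ℤ), Function.Injective kk →
      (∑ i, ι (a i) * ((X ^ kk i : Rˣ) : R)) ∈ I → ∀ i, ι (a i) ∈ I) ∧
    (∀ r : R, r ∈ I ↔ ∃ f : ℤ →₀ A, (∀ i : ℤ, ι (f i) ∈ I) ∧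
      r = f.sum fun i b => ι b * ((X ^ i : Rˣ) : R)) := by
  -- scalar multiples stay in I
  have hsmul : ∀ (c : k) (r : R), r ∈ I → c • r ∈ I := by
    intro c r hr
    rw [Algebra.smul_def]
    exact I.mul_mem_left _ _ hr
  -- the action preserves I
  have hρmem : ∀ (h : H) (r : R), r ∈ I → ρ h r ∈ I := by
    intro h r hr
    have : ρ h r ∈ (⇑(ρ h) '' (I : Set R)) := ⟨r, hr, rfl⟩
    rwa [hI h] at this
  -- dividing by a nonzero scalar
  have hdivc : ∀ (c : k) (b : A), c ≠ 0 → ι (c • b) ∈ I → ι b ∈ I := by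
    intro c b hc hm
    have : ι b = c⁻¹ • ι (c • b) := by
      rw [map_smul, smul_smul, inv_mul_cancel₀ hc, one_smul]
    rw [this]
    exact hsmul _ _ hm
  -- λ₀ has no nontrivial integer power equal to 1
  have hune : ∀ m : ℤ, m ≠ 0 → (Λ h₀) ^ m ≠ 1 := by
    intro m hm h1
    have h2 : (Λ h₀) ^ m.natAbs = 1 := by
      rcases Int.natAbs_eq m with h | h
      · rw [← zpow_natCast, ← h, h1]
      · rw [← zpow_natCast, ← neg_neg (m.natAbs : ℤ), ← h, zpow_neg, h1, inv_one]
    have h3 : ((Λ h₀ : k)) ^ m.natAbs = 1 := by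
      have := congrArg Units.val h2
      simpa using this
    exact hlam0 m.natAbs (Int.natAbs_pos.mpr hm) h3
  -- action on powers of X
  have key_unit : ∀ (h : H) (m : ℤ),
      ρ h ((X ^ m : Rˣ) : R) = ((Λ h ^ m : kˣ) : k) • ((X ^ m : Rˣ) : R) := by
    intro h m
    set ψ : Rˣ →* Rˣ := Units.map ((ρ h : R ≃+* R) : R →+* R).toMonoidHom with hψ
    set cU : Rˣ := Units.map (algebraMap k R).toMonoidHom (Λ h) with hcU
    have hψX : ψ X = cU * X := by
      ext
      show (ρ h) (X : R) = ((cU : R) * (X : R))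
      rw [heig h, Algebra.smul_def, hcU]
      simp [Units.coe_map]
    have hcomm : Commute cU X := by
      ext
      show (cU : R) * (X : R) = (X : R) * (cU : R)
      rw [hcU]
      simp only [Units.coe_map, RingHom.toMonoidHom_eq_coe, MonoidHom.coe_coe]
      exact (Algebra.commutes _ _)
    have hpow : ψ (X ^ m) = cU ^ m * X ^ m := by
      rw [map_zpow, hψX, hcomm.mul_zpow]
    have : ρ h ((X ^ m : Rˣ) : R) = ((ψ (X ^ m) : Rˣ) : R) := rfl
    rw [this, hpow, Units.val_mul]
    have hval : ((cU ^ m : Rˣ) : R) = algebraMap k R ((Λ h ^ m : kˣ) : k) := by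
      rw [hcU, ← map_zpow (Units.map (algebraMap k R).toMonoidHom) (Λ h) m,
        Units.coe_map]
      simp
    rw [hval, Algebra.smul_def]
  -- conjugation by X
  have hXmX : ∀ m : ℤ, (X : R) * ((X ^ m : Rˣ) : R) * ((X⁻¹ : Rˣ) : R) = ((X ^ m : Rˣ) : R) := by
    intro m
    have h1 : (X * X ^ m * X⁻¹ : Rˣ) = X ^ m := by
      rw [((Commute.refl X).zpow_right m).eq, mul_inv_cancel_right]
    calc (X : R) * ((X ^ m : Rˣ) : R) * ((X⁻¹ : Rˣ) : R)
        = ((X * X ^ m * X⁻¹ : Rˣ) : R) := by rw [Units.val_mul, Units.val_mul]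
      _ = ((X ^ m : Rˣ) : R) := by rw [h1]
  have hconj : ∀ (a : A) (m : ℤ),
      (X : R) * (ι a * ((X ^ m : Rˣ) : R)) * ((X⁻¹ : Rˣ) : R)
        = ι (σ a) * ((X ^ m : Rˣ) : R) := by
    intro a m
    calc (X : R) * (ι a * ((X ^ m : Rˣ) : R)) * ((X⁻¹ : Rˣ) : R)
        = ((X : R) * ι a) * (((X ^ m : Rˣ) : R) * ((X⁻¹ : Rˣ) : R)) := by
          rw [mul_assoc, mul_assoc, mul_assoc]
      _ = (ι (σ a) * (X : R)) * (((X ^ m : Rˣ) : R) * ((X⁻¹ : Rˣ) : R)) := by rw [hrel a]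
      _ = ι (σ a) * ((X : R) * ((X ^ m : Rˣ) : R) * ((X⁻¹ : Rˣ) : R)) := by
          rw [mul_assoc, mul_assoc]
      _ = ι (σ a) * ((X ^ m : Rˣ) : R) := by rw [hXmX m]
  -- undoing σ using h₀⁻¹
  have hunσ : ∀ b : A, ι (σ b) ∈ I → ι b ∈ I := by
    intro b hb
    have h1 : ρ h₀⁻¹ (ι (σ b)) = ι b := by
      rw [hstable, map_inv]
      congr 1
      have : (ρA h₀)⁻¹ = (ρA h₀).symm := rfl
      rw [this, AlgEquiv.symm_apply_eq, hh₀]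
    have := hρmem h₀⁻¹ _ hb
    rwa [h1] at this
  -- main induction
  have key : ∀ (n : ℕ) (a : Fin n → A) (kk : Fin n → ℤ), Function.Injective kk →
      (∑ i, ι (a i) * ((X ^ kk i : Rˣ) : R)) ∈ I → ∀ i, ι (a i) ∈ I := by
    intro n
    induction n with
    | zero => exact fun a kk _ _ i => i.elim0
    | succ n ih =>
      intro a kk hinj hx
      set x : R := ∑ i, ι (a i) * ((X ^ kk i : Rˣ) : R) with hxdef
      have hρx : ρ h₀ x = ∑ i, ι (σ (a i)) *
          (((Λ h₀ ^ kk i : kˣ) : k) • ((X ^ kk i : Rˣ) : R)) := by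
        rw [hxdef, map_sum]
        refine Finset.sum_congr rfl fun i _ => ?_
        rw [map_mul, hstable, hh₀, key_unit]
      have hconjx : (X : R) * x * ((X⁻¹ : Rˣ) : R)
          = ∑ i, ι (σ (a i)) * ((X ^ kk i : Rˣ) : R) := by
        rw [hxdef, Finset.mul_sum, Finset.sum_mul]
        exact Finset.sum_congr rfl fun i _ => hconj _ _
      set c : Fin (n + 1) → k := fun i => ((Λ h₀ ^ kk i : kˣ) : k) with hc
      set b : Fin (n + 1) → A := fun i => (c i - c 0) • σ (a i) with hb
      set w : R := ρ h₀ x - (c 0) • ((X : R) * x * ((X⁻¹ : Rˣ) : R)) with hwdef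
      have hwI : w ∈ I := by
        refine I.sub_mem (hρmem _ _ hx) (hsmul _ _ ?_)
        exact I.mul_mem_right _ _ (I.mul_mem_left _ _ hx)
      have hw : w = ∑ i, ι (b i) * ((X ^ kk i : Rˣ) : R) := by
        rw [hwdef, hρx, hconjx, Finset.smul_sum, ← Finset.sum_sub_distrib]
        refine Finset.sum_congr rfl fun i _ => ?_
        rw [hb]
        simp only [map_smul, sub_smul, smul_mul_assoc, mul_smul_comm, sub_mul,
          map_sub, hc]
      have hb0 : b 0 = 0 := by simp [hb]
      have hw' : (∑ i : Fin n, ι (b i.succ) * ((X ^ kk i.succ : Rˣ) : R)) ∈ I := by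
        have : w = ι (b 0) * ((X ^ kk 0 : Rˣ) : R)
            + ∑ i : Fin n, ι (b i.succ) * ((X ^ kk i.succ : Rˣ) : R) := by
          rw [hw, Fin.sum_univ_succ]
        rw [this, hb0] at hwI
        simpa using hwI
      have hbI := ih (fun i => b i.succ) (fun i => kk i.succ)
        (fun i j hij => Fin.succ_injective n (hinj hij)) hw'
      have hcne : ∀ i : Fin n, c i.succ - c 0 ≠ 0 := by
        intro i
        refine sub_ne_zero.mpr ?_
        intro hcc
        have hu : (Λ h₀) ^ kk i.succ = (Λ h₀) ^ kk 0 := Units.ext hcc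
        have hd : (Λ h₀) ^ (kk i.succ - kk 0) = 1 := by
          rw [zpow_sub, hu, mul_inv_cancel]
        refine hune (kk i.succ - kk 0) ?_ hd
        intro h0
        exact (Fin.succ_ne_zero i) (hinj (sub_eq_zero.mp h0))
      have hsuccI : ∀ i : Fin n, ι (a i.succ) ∈ I := by
        intro i
        have := hdivc _ _ (hcne i) (by simpa [hb] using hbI i)
        exact hunσ _ this
      have h0I : ι (a 0) ∈ I := by
        have hterm : ι (a 0) * ((X ^ kk 0 : Rˣ) : R) ∈ I := by
          have hxs : x = ι (a 0) * ((X ^ kk 0 : Rˣ) : R)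
              + ∑ i : Fin n, ι (a i.succ) * ((X ^ kk i.succ : Rˣ) : R) := by
            rw [hxdef, Fin.sum_univ_succ]
          have hsum : (∑ i : Fin n, ι (a i.succ) * ((X ^ kk i.succ : Rˣ) : R)) ∈ I :=
            I.finsetSum_mem _ _ fun i _ => I.mul_mem_right _ _ (hsuccI i)
          have := I.sub_mem hx hsum
          rwa [hxs, add_sub_cancel_right] at this
        have : ι (a 0) * ((X ^ kk 0 : Rˣ) : R) * (((X ^ kk 0)⁻¹ : Rˣ) : R) = ι (a 0) := by
          rw [mul_assoc, ← Units.val_mul, mul_inv_cancel, Units.val_one, mul_one]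
        rw [← this]
        exact I.mul_mem_right _ _ hterm
      intro i
      refine Fin.cases h0I hsuccI i
  refine ⟨key, fun r => ⟨fun hr => ?_, fun ⟨f, hfI, hfr⟩ => ?_⟩⟩
  · obtain ⟨f, hf, -⟩ := hbasis r
    refine ⟨f, ?_, hf⟩
    set s := f.support with hs
    set e := s.equivFin with he
    set kk : Fin s.card → ℤ := fun j => ((e.symm j : ℤ)) with hkk
    have hkinj : Function.Injective kk := fun i j hij =>
      e.symm.injective (Subtype.coe_injective hij)
    have hsum : (∑ j, ι (f (kk j)) * ((X ^ kk j : Rˣ) : R)) = r := by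
      rw [hf, Finsupp.sum]
      rw [← Finset.sum_coe_sort s (fun i => ι (f i) * ((X ^ i : Rˣ) : R))]
      exact Equiv.sum_comp e.symm (fun i : s => ι (f i) * ((X ^ (i : ℤ) : Rˣ) : R))
    have hall := key s.card (fun j => f (kk j)) kk hkinj (by rw [hsum]; exact hr)
    intro m
    by_cases hm : m ∈ s
    · have : f m = f (kk (e ⟨m, hm⟩)) := by rw [hkk]; simp
      rw [this]
      exact hall _
    · have : f m = 0 := Finsupp.notMem_support_iff.mp hm
      rw [this, map_zero]
      exact I.zero_mem
  · rw [hfr, Finsupp.sum]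
    exact I.finsetSum_mem _ _ fun i _ => I.mul_mem_right _ _ (hfI i)
end

section
/- Let R = A[X; σ, δ] be a Cauchon extension with localisation R̂ = R S⁻¹ at S = {Xⁿ}. Define θ(a) = Σ_{n≥0} ((1−q)^{−n}/[n]!_q) δⁿ(σ^{−n}(a)) X^{−n} ∈ R̂ for a ∈ A. Then for every h ∈ H and a ∈ A, h·θ(a) = θ(h·a). -/
/-- An ideal invariant under each of a family of maps. -/
def IsActIdeal {H S : Type*} [Ring S] (act : H → S → S) (I : TwoSidedIdeal S) : Prop :=
  ∀ (h : H) (a : S), a ∈ I → act h a ∈ I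

/-- An `H`-prime ideal: a proper invariant ideal `P` such that whenever `I·J ⊆ P` for
invariant ideals `I, J`, either `I ⊆ P` or `J ⊆ P`. -/
def IsActPrime {H S : Type*} [Ring S] (act : H → S → S) (P : TwoSidedIdeal S) : Prop :=
  P ≠ ⊤ ∧ IsActIdeal act P ∧
    ∀ I J : TwoSidedIdeal S, IsActIdeal act I → IsActIdeal act J →
      (∀ x ∈ I, ∀ y ∈ J, x * y ∈ P) → I ≤ P ∨ J ≤ P

open OreLocalization in
/-- In a Cauchon extension `R = A[X; σ, δ]` with localisation `R̂ = R S⁻¹` at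
`S = {Xⁿ}`, the Cauchon map
`θ(a) = Σₙ ((1−q)⁻ⁿ/[n]!_q) δⁿ(σ⁻ⁿ(a)) X⁻ⁿ` is `H`-equivariant:
`h·θ(a) = θ(h·a)` for all `h ∈ H` and `a ∈ A`.  (The sum is truncated at any bound `D`
beyond which its terms vanish, which exists since `δ` is locally nilpotent.) -/
theorem cauchon_theta_equivariant
    {k : Type*} [Field k] {A R H : Type*} [Ring A] [Algebra k A] [Ring R] [Algebra k R]
    [CommGroup H]
    (hdom : IsDomain A) (hnoeth : IsNoetherianRing A)
    (σ : A ≃ₐ[k] A) (δ : A →ₗ[k] A)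
    (hder : ∀ a b : A, δ (a * b) = σ a * δ b + δ a * b)
    (hnil : ∀ a : A, ∃ n : ℕ, (⇑δ)^[n] a = 0)
    (q : k) (hq0 : q ≠ 0) (hqru : ∀ n : ℕ, 0 < n → q ^ n ≠ 1)
    (hqcomm : ∀ a : A, σ (δ a) = q • δ (σ a))
    (ι : A →ₐ[k] R) (hι : Function.Injective ι) (X : R)
    (hrel : ∀ a : A, X * ι a = ι (σ a) * X + ι (δ a))
    (hbasis : ∀ r : R, ∃! f : ℕ →₀ A, r = f.sum fun i b => ι b * X ^ i)
    (ρ : H →* (R ≃ₐ[k] R)) (ρA : H →* (A ≃ₐ[k] A))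
    (hstable : ∀ (h : H) (a : A), ρ h (ι a) = ι (ρA h a))
    (Λ : H → kˣ) (heig : ∀ h : H, ρ h X = (Λ h : k) • X)
    (h₀ : H) (hh₀ : ∀ a : A, ρA h₀ a = σ a)
    (hlam0 : ∀ n : ℕ, 0 < n → ((Λ h₀ : k)) ^ n ≠ 1)
    (hHcp : ∀ Q : TwoSidedIdeal A, IsActPrime (fun h => ⇑(ρA h)) Q →
      Q.IsCompletelyPrime)
    -- the localisation `R̂ = R S⁻¹` at the Ore set `S = {Xⁿ | n ∈ ℕ}` and the induced
    -- action of `H` on it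
    [OreSet (Submonoid.powers X)]
    (ρhat : H →* (R[(Submonoid.powers X)⁻¹] ≃+* R[(Submonoid.powers X)⁻¹]))
    (hρhat : ∀ (h : H) (r : R), ρhat h (numeratorHom r) = numeratorHom (ρ h r)) :
    ∀ (h : H) (a : A) (D : ℕ),
      (∀ n : ℕ, D < n → (⇑δ)^[n] ((⇑σ.symm)^[n] a) = 0) →
      (∀ n : ℕ, D < n → (⇑δ)^[n] ((⇑σ.symm)^[n] (ρA h a)) = 0) →
      ρhat h (∑ n ∈ Finset.range (D + 1),
          (ι ((((1 - q) ^ n *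
              ∏ i ∈ Finset.range n, ∑ j ∈ Finset.range (i + 1), q ^ j)⁻¹) •
            (⇑δ)^[n] ((⇑σ.symm)^[n] a)) : R) /ₒ
          (⟨X ^ n, n, rfl⟩ : Submonoid.powers X)) =
        ∑ n ∈ Finset.range (D + 1),
          (ι ((((1 - q) ^ n *
              ∏ i ∈ Finset.range n, ∑ j ∈ Finset.range (i + 1), q ^ j)⁻¹) •
            (⇑δ)^[n] ((⇑σ.symm)^[n] (ρA h a))) : R) /ₒ
          (⟨X ^ n, n, rfl⟩ : Submonoid.powers X) := by
  classical
  -- uniqueness of degree ≤ 1 representations in the basis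
  have deg1 : ∀ b c b' c' : A, ι b * X + ι c = ι b' * X + ι c' → b = b' ∧ c = c' := by
    intro b c b' c' hbc
    have hsum : ∀ b c : A,
        ((Finsupp.single 1 b + Finsupp.single 0 c : ℕ →₀ A).sum fun i b => ι b * X ^ i)
          = ι b * X + ι c := by
      intro b c
      have h0 : ∀ i : ℕ, ι (0 : A) * X ^ i = 0 := by intro i; simp
      rw [Finsupp.sum_add_index' (fun i => h0 i)
          (fun i x y => by rw [map_add, add_mul]),
        Finsupp.sum_single_index (h0 1), Finsupp.sum_single_index (h0 0)]
      simp
    obtain ⟨f, hf, hu⟩ := hbasis (ι b * X + ι c)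
    have h1 : (Finsupp.single 1 b + Finsupp.single 0 c : ℕ →₀ A) = f :=
      hu _ (hsum b c).symm
    have h2 : (Finsupp.single 1 b' + Finsupp.single 0 c' : ℕ →₀ A) = f :=
      hu _ (hbc.trans (hsum b' c').symm)
    have h12 : (Finsupp.single 1 b + Finsupp.single 0 c : ℕ →₀ A)
        = Finsupp.single 1 b' + Finsupp.single 0 c' := by rw [h1, h2]
    constructor
    · simpa using DFunLike.congr_fun h12 1
    · simpa using DFunLike.congr_fun h12 0
  -- commutation relations of the H-action with σ and δ
  have comm_both : ∀ (h : H) (a : A),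
      ρA h (σ a) = σ (ρA h a) ∧ ρA h (δ a) = (Λ h : k) • δ (ρA h a) := by
    intro h a
    have hΛ : (Λ h : k) ≠ 0 := Units.ne_zero _
    have e1 : ρ h (X * ι a)
        = ι ((Λ h : k) • σ (ρA h a)) * X + ι ((Λ h : k) • δ (ρA h a)) := by
      rw [map_mul, heig, hstable, smul_mul_assoc, hrel (ρA h a), smul_add,
        ← smul_mul_assoc, ← map_smul ι, ← map_smul ι]
    have e2 : ρ h (X * ι a)
        = ι ((Λ h : k) • ρA h (σ a)) * X + ι (ρA h (δ a)) := by
      rw [hrel a, map_add, map_mul, hstable, heig, hstable, mul_smul_comm,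
        ← smul_mul_assoc, ← map_smul ι]
    obtain ⟨hA, hB⟩ := deg1 _ _ _ _ (e2.symm.trans e1)
    constructor
    · have := congrArg (fun x => ((Λ h : k)⁻¹) • x) hA
      simpa [smul_smul, inv_mul_cancel₀ hΛ] using this
    · exact hB
  have commσs : ∀ (h : H) (a : A), ρA h (σ.symm a) = σ.symm (ρA h a) := by
    intro h a
    apply σ.injective
    rw [← (comm_both h (σ.symm a)).1, AlgEquiv.apply_symm_apply, AlgEquiv.apply_symm_apply]
  have commσsIter : ∀ (h : H) (n : ℕ) (a : A),
      ρA h ((⇑σ.symm)^[n] a) = (⇑σ.symm)^[n] (ρA h a) := by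
    intro h n
    induction n with
    | zero => intro a; simp
    | succ n ih =>
      intro a
      rw [Function.iterate_succ_apply, Function.iterate_succ_apply, ih, commσs]
  have commδIter : ∀ (h : H) (n : ℕ) (a : A),
      ρA h ((⇑δ)^[n] a) = (Λ h : k) ^ n • (⇑δ)^[n] (ρA h a) := by
    intro h n
    induction n with
    | zero => intro a; simp
    | succ n ih =>
      intro a
      rw [Function.iterate_succ_apply', Function.iterate_succ_apply',
        (comm_both h _).2, ih, map_smul, smul_smul, pow_succ, mul_comm]
  intro h a D _ _
  have hΛ0 : ∀ n : ℕ, ((Λ h : k) ^ n) ≠ 0 := fun n => pow_ne_zero n (Units.ne_zero _)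
  -- key localisation computation
  have key : ∀ (b b' : A) (n : ℕ), ρA h b = (Λ h : k) ^ n • b' →
      ρhat h ((ι b : R) /ₒ (⟨X ^ n, n, rfl⟩ : Submonoid.powers X))
        = (ι b' : R) /ₒ (⟨X ^ n, n, rfl⟩ : Submonoid.powers X) := by
    intro b b' n hbb'
    set s : Submonoid.powers X := ⟨X ^ n, n, rfl⟩ with hs
    set cA : A := algebraMap k A ((Λ h : k) ^ n) with hcA
    have hcAunit : IsUnit (numeratorHom (ι cA) : R[(Submonoid.powers X)⁻¹]) :=
      IsUnit.map _ (IsUnit.map ι (IsUnit.map (algebraMap k A)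
        (isUnit_iff_ne_zero.mpr (hΛ0 n))))
    have hsunit : IsUnit (numeratorHom ((s : R)) : R[(Submonoid.powers X)⁻¹]) :=
      numerator_isUnit s
    have hXn : ρ h (X ^ n) = ι cA * X ^ n := by
      rw [map_pow, heig, smul_pow, Algebra.smul_def, hcA, ι.commutes]
    have hcan : ∀ r : R,
        (numeratorHom ((s : R)) : R[(Submonoid.powers X)⁻¹]) * ((r : R) /ₒ s)
          = numeratorHom r := by
      intro r
      rw [OreLocalization.numeratorHom_apply, OreLocalization.numeratorHom_apply]
      exact OreLocalization.mul_cancel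
    have main : (numeratorHom (ι cA) : R[(Submonoid.powers X)⁻¹])
          * (numeratorHom ((s : R)) * ρhat h ((ι b : R) /ₒ s))
        = numeratorHom (ι cA)
          * (numeratorHom ((s : R)) * ((ι b' : R) /ₒ s)) := by
      have lhs : (numeratorHom (ι cA) : R[(Submonoid.powers X)⁻¹])
            * numeratorHom ((s : R)) * ρhat h ((ι b : R) /ₒ s)
          = numeratorHom (ι (ρA h b)) := by
        rw [← map_mul, show (ι cA * (s : R)) = ρ h (X ^ n) from hXn.symm,
          ← hρhat, ← map_mul (ρhat h), hcan (ι b), hρhat, hstable]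
      calc (numeratorHom (ι cA) : R[(Submonoid.powers X)⁻¹])
            * (numeratorHom ((s : R)) * ρhat h ((ι b : R) /ₒ s))
          = numeratorHom (ι cA) * numeratorHom ((s : R)) * ρhat h ((ι b : R) /ₒ s) := by
            rw [mul_assoc]
        _ = numeratorHom (ι (ρA h b)) := lhs
        _ = numeratorHom (ι cA) * numeratorHom (ι b') := by
            rw [← map_mul, ← map_mul, hbb', hcA, ← Algebra.smul_def]
        _ = numeratorHom (ι cA) * (numeratorHom ((s : R)) * ((ι b' : R) /ₒ s)) := by
            rw [hcan (ι b')]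
    exact hsunit.mul_left_cancel (hcAunit.mul_left_cancel main)
  rw [map_sum]
  refine Finset.sum_congr rfl ?_
  intro n _
  apply key
  set coef : k := (((1 - q) ^ n *
      ∏ i ∈ Finset.range n, ∑ j ∈ Finset.range (i + 1), q ^ j)⁻¹) with hcoef
  rw [map_smul, commδIter, commσsIter, smul_comm]
end

section
/- Let R be a k-algebra generated by a set X, τ a k-algebra automorphism of R, and δ a k-linear left τ-derivation. (i) If there is q ∈ k with δτ(x) = qτδ(x) for all x ∈ X, then δτ = qτδ on all of R. (ii) If δτ = qτδ and for each x ∈ X there is d with δ^d(x) = 0, then δ is locally nilpotent. -/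
/-!
The elements satisfying either property form a subalgebra, so each property need only be
checked on the generators. For the commutation rule this is a one-line computation with the
twisted Leibniz rule. For local nilpotence the commutation rule gives `δⁿ τ = qⁿ τ δⁿ`, so `τ` preserves the
kernel of every `δⁿ`; then `δᵐ a = 0` and `δⁿ b = 0` force `δᵐ⁺ⁿ (a b) = 0`, by induction on `m`
and `n` using `δ (a b) = τ a · δ b + δ a · b`.
-/

section LeftSkewDerivation

variable {k R : Type*} [CommSemiring k] [Ring R] [Algebra k R] {τ : R →ₐ[k] R} {δ : R →ₗ[k] R}

theorem map_one_eq_zero_of_leibniz (hder : ∀ a b : R, δ (a * b) = τ a * δ b + δ a * b) :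
    δ 1 = 0 := by
  simpa using hder 1 1

theorem map_algebraMap_eq_zero_of_leibniz (hder : ∀ a b : R, δ (a * b) = τ a * δ b + δ a * b)
    (r : k) : δ (algebraMap k R r) = 0 := by
  rw [Algebra.algebraMap_eq_smul_one, map_smul, map_one_eq_zero_of_leibniz hder, smul_zero]

theorem map_comp_eq_smul_comp_of_mem_adjoin
    (hder : ∀ a b : R, δ (a * b) = τ a * δ b + δ a * b) {X : Set R} {q : k}
    (hX : ∀ x ∈ X, δ (τ x) = q • τ (δ x)) {a : R} (ha : a ∈ Algebra.adjoin k X) :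
    δ (τ a) = q • τ (δ a) := by
  induction ha using Algebra.adjoin_induction with
  | mem x hx => exact hX x hx
  | algebraMap r =>
    rw [AlgHom.commutes, map_algebraMap_eq_zero_of_leibniz hder, map_zero, smul_zero]
  | add x y _ _ hx hy => rw [map_add, map_add, hx, hy, map_add, map_add, smul_add]
  | mul x y _ _ hx hy =>
    rw [map_mul, hder, hx, hy, hder, map_add, map_mul, map_mul, smul_add, mul_smul_comm,
      smul_mul_assoc]

theorem iterate_map_eq_smul_map_iterate {q : k} (hq : ∀ a : R, δ (τ a) = q • τ (δ a)) (n : ℕ) (a : R) :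
    δ^[n] (τ a) = q ^ n • τ (δ^[n] a) := by
  induction n generalizing a with
  | zero => simp
  | succ n ih =>
    rw [Function.iterate_succ_apply', ih, map_smul, hq, smul_smul, ← pow_succ,
      Function.iterate_succ_apply']

theorem iterate_map_eq_zero {q : k} (hq : ∀ a : R, δ (τ a) = q • τ (δ a)) {n : ℕ} {a : R}
    (ha : δ^[n] a = 0) : δ^[n] (τ a) = 0 := by
  rw [iterate_map_eq_smul_map_iterate hq, ha, map_zero, smul_zero]

theorem iterate_eq_zero_of_le {m n : ℕ} {a : R} (ha : δ^[m] a = 0) (hmn : m ≤ n) :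
    δ^[n] a = 0 := by
  rw [← Nat.sub_add_cancel hmn, Function.iterate_add_apply, ha, iterate_map_zero]

theorem iterate_mul_eq_zero (hder : ∀ a b : R, δ (a * b) = τ a * δ b + δ a * b)
    (hτ : ∀ (n : ℕ) (a : R), δ^[n] a = 0 → δ^[n] (τ a) = 0) (m n : ℕ) {a b : R}
    (ha : δ^[m] a = 0) (hb : δ^[n] b = 0) : δ^[m + n] (a * b) = 0 := by
  induction m generalizing n a b with
  | zero => simp_all
  | succ m ihm =>
    induction n generalizing a b with
    | zero => simp_all
    | succ n ihn =>
      have ha' : δ^[m] (δ a) = 0 := by rwa [← Function.iterate_succ_apply]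
      have hb' : δ^[n] (δ b) = 0 := by rwa [← Function.iterate_succ_apply]
      rw [← add_assoc, Function.iterate_succ_apply, hder, iterate_map_add, ihn (hτ _ _ ha) hb',
        zero_add, add_right_comm]
      exact ihm (n + 1) ha' hb

theorem exists_iterate_eq_zero_of_mem_adjoin
    (hder : ∀ a b : R, δ (a * b) = τ a * δ b + δ a * b)
    (hτ : ∀ (n : ℕ) (a : R), δ^[n] a = 0 → δ^[n] (τ a) = 0) {X : Set R}
    (hX : ∀ x ∈ X, ∃ n : ℕ, δ^[n] x = 0) {a : R} (ha : a ∈ Algebra.adjoin k X) :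
    ∃ n : ℕ, δ^[n] a = 0 := by
  induction ha using Algebra.adjoin_induction with
  | mem x hx => exact hX x hx
  | algebraMap r => exact ⟨1, map_algebraMap_eq_zero_of_leibniz hder r⟩
  | add x y _ _ hx hy =>
    obtain ⟨m, hm⟩ := hx
    obtain ⟨n, hn⟩ := hy
    refine ⟨max m n, ?_⟩
    rw [iterate_map_add, iterate_eq_zero_of_le hm (le_max_left m n),
      iterate_eq_zero_of_le hn (le_max_right m n), add_zero]
  | mul x y _ _ hx hy =>
    obtain ⟨m, hm⟩ := hx
    obtain ⟨n, hn⟩ := hy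
    exact ⟨m + n, iterate_mul_eq_zero hder hτ m n hm hn⟩

end LeftSkewDerivation

/-- For a `k`-algebra `R` generated by a set `X`, an automorphism `τ` and a left
`τ`-derivation `δ`: (i) if `δτ = qτδ` holds on `X`, it holds on all of `R`;
(ii) if `δτ = qτδ` and `δ` kills a power of each element of `X`, then `δ` is locally
nilpotent. -/
theorem derivation_generators {k : Type*} [Field k] {R : Type*} [Ring R] [Algebra k R]
    (X : Set R) (hgen : Algebra.adjoin k X = ⊤)
    (τ : R ≃ₐ[k] R) (δ : R →ₗ[k] R)
    (hder : ∀ a b : R, δ (a * b) = τ a * δ b + δ a * b) :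
    (∀ q : k, (∀ x ∈ X, δ (τ x) = q • τ (δ x)) → ∀ a : R, δ (τ a) = q • τ (δ a)) ∧
    (∀ q : k, (∀ a : R, δ (τ a) = q • τ (δ a)) →
      (∀ x ∈ X, ∃ d : ℕ, 0 < d ∧ (⇑δ)^[d] x = 0) →
      ∀ a : R, ∃ n : ℕ, (⇑δ)^[n] a = 0) := by
  have hmem (a : R) : a ∈ Algebra.adjoin k X := hgen ▸ Algebra.mem_top
  constructor
  · intro q hX a
    exact map_comp_eq_smul_comp_of_mem_adjoin (τ := τ.toAlgHom) hder hX (hmem a)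
  · intro q hq hX a
    exact exists_iterate_eq_zero_of_mem_adjoin (τ := τ.toAlgHom) hder
      (fun _ _ => iterate_map_eq_zero (τ := τ.toAlgHom) hq)
      (fun x hx => (hX x hx).imp fun _ => And.right) (hmem a)
end
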